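/- arXiv:1210.4795 — 7 statements merged into one kernel-verified Lean document; each statement's English description precedes it below -/
import Mathlib

section
/- Let S be an n_t×n_t Hermitian positive semidefinite complex matrix and let C be an invertible n_t×n_t complex matrix such that Cᴴ(S^{1/2}GᴴG S^{1/2} + I)C = I and Cᴴ(S^{1/2}HᴴH S^{1/2} + I)C = Λ, where Λ = diag(λ_1,…,λ_{n_t}) with λ_1 ≥ … ≥ λ_b > 1 ≥ λ_{b+1} ≥ … ≥ λ_{n_t} > 0. Partition C = [C_1 C_2], where C_1 consists of the first b columns of C. Then the matrix Q_S* = S^{1/2} C · blockdiag((C_1ᴴC_1)^{-1}, 0) · Cᴴ S^{1/2} satisfies 0 ⪯ Q_S* ⪯ S and R(Q_S*) = Σ_{i=1}^{b} log λ_i; moreover, for every Hermitian Q with 0 ⪯ Q ⪯ S one has R(Q) ≤ Σ_{i=1}^{b} log λ_i. In other words, the secrecy capacity of the MIMO Gaussian wiretap channel under the matrix power constraint Q ⪯ S equals Σ_{i=1}^{b} log λ_i and is attained by Q_S*. -/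
open Matrix
open scoped ComplexOrder

/-!
Whiten with `T = S^{1/2}`: by hypothesis `C` simultaneously reduces `1 + T GᴴG T` to `1` and
`1 + T HᴴH T` to `Λ`. Every `Q` with `0 ≤ Q ≤ S` factors as `T W T` with `0 ≤ W ≤ 1` (Douglas'
lemma), and `det (1 + A B) = det (1 + B A)` turns `R(Q)` into
`log det (N + E (Λ - 1) Eᴴ) - log det N` with `N = 1 + W^{1/2} T GᴴG T W^{1/2}` and `E Eᴴ ≤ N`.
Replacing `Λ - 1` by its positive part and a Schur complement bound this by
`log det (1 + (Λ - 1)₊) = ∑_{i < b} log λ_i`. Taking for `W` the orthogonal projection onto the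
span of the first `b` columns of `C` gives `Q_S*` and attains the bound.
-/

/-- The positive semidefinite square root of a positive semidefinite matrix
(the definition of `Matrix.PosSemidef.sqrt` in the older Mathlib, since removed). -/
noncomputable def Matrix.PosSemidef.sqrt {n 𝕜 : Type*} [Fintype n] [RCLike 𝕜] [DecidableEq n]
    {A : Matrix n n 𝕜} (hA : A.PosSemidef) : Matrix n n 𝕜 :=
  hA.1.eigenvectorUnitary.1 * diagonal ((↑) ∘ (√·) ∘ hA.1.eigenvalues) *
  (star hA.1.eigenvectorUnitary : Matrix n n 𝕜)

/-- The secrecy rate `R(Q) = log det(I + H Q Hᴴ) − log det(I + G Q Gᴴ)`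
(both determinants are positive reals for `Q` PSD; we take real parts). -/
noncomputable def secrecyRate {nr ne nt : ℕ}
    (H : Matrix (Fin nr) (Fin nt) ℂ) (G : Matrix (Fin ne) (Fin nt) ℂ)
    (Q : Matrix (Fin nt) (Fin nt) ℂ) : ℝ :=
  Real.log ((1 + H * Q * Hᴴ).det.re) - Real.log ((1 + G * Q * Gᴴ).det.re)

namespace Matrix

variable {n m 𝕜 : Type*} [Fintype n] [RCLike 𝕜]

theorem conjTranspose_submatrix_mul_mul_submatrix (A X : Matrix n n 𝕜) (e : m → n) :
    (A.submatrix id e)ᴴ * X * A.submatrix id e = (Aᴴ * X * A).submatrix e e := by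
  rw [submatrix_mul _ _ _ id _ Function.bijective_id,
    submatrix_mul _ _ _ id _ Function.bijective_id, submatrix_id_id, conjTranspose_submatrix]

section

variable [DecidableEq n]

theorem posDef_conjTranspose_submatrix_mul_self {C : Matrix n n 𝕜} (hC : IsUnit C) {e : m → n}
    (he : Function.Injective e) : ((C.submatrix id e)ᴴ * C.submatrix id e).PosDef := by
  have := (PosDef.conjTranspose_mul_self C (mulVec_injective_of_isUnit hC)).submatrix he
  rwa [← Matrix.mul_one Cᴴ, ← conjTranspose_submatrix_mul_mul_submatrix, Matrix.mul_one] at this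

theorem PosSemidef.sqrt_eq_conjStarAlgAut {A : Matrix n n 𝕜} (hA : A.PosSemidef) :
    hA.sqrt = Unitary.conjStarAlgAut 𝕜 _ hA.1.eigenvectorUnitary
      (diagonal (RCLike.ofReal ∘ Real.sqrt ∘ hA.1.eigenvalues)) :=
  rfl

theorem PosSemidef.posSemidef_sqrt {A : Matrix n n 𝕜} (hA : A.PosSemidef) : hA.sqrt.PosSemidef :=
  (posSemidef_diagonal_iff.mpr fun i => by simp [Real.sqrt_nonneg]).mul_mul_conjTranspose_same
    (hA.1.eigenvectorUnitary : Matrix n n 𝕜)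

theorem PosSemidef.sqrt_mul_self {A : Matrix n n 𝕜} (hA : A.PosSemidef) :
    hA.sqrt * hA.sqrt = A := by
  conv_rhs => rw [hA.1.spectral_theorem]
  rw [sqrt_eq_conjStarAlgAut, ← map_mul, diagonal_mul_diagonal]
  congr 2
  funext i
  simp [← RCLike.ofReal_mul, Real.mul_self_sqrt (hA.eigenvalues_nonneg i)]

theorem PosSemidef.one_le_det_one_add {X : Matrix n n 𝕜} (hX : X.PosSemidef) :
    1 ≤ (1 + X).det := by
  rw [hX.1.spectral_theorem, ← map_one (Unitary.conjStarAlgAut 𝕜 _ hX.1.eigenvectorUnitary),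
    ← map_add, det_map, ← diagonal_one, diagonal_add, det_diagonal]
  refine Finset.one_le_prod fun i _ => ?_
  simpa using hX.eigenvalues_nonneg i

theorem PosDef.det_le_det_of_posSemidef_sub {M N : Matrix n n 𝕜} (hM : M.PosDef)
    (hMN : (N - M).PosSemidef) : M.det ≤ N.det := by
  set R := hMN.sqrt
  have hRH : Rᴴ = R := hMN.posSemidef_sqrt.1
  have hN : N = M + R * R := by rw [hMN.sqrt_mul_self]; abel
  have hRMR : (R * M⁻¹ * R).PosSemidef := by
    simpa [hRH] using hM.inv.posSemidef.mul_mul_conjTranspose_same R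
  rw [hN, det_add_mul R R ((isUnit_iff_isUnit_det M).mp hM.isUnit)]
  exact le_mul_of_one_le_right hM.det_pos.le hRMR.one_le_det_one_add

open scoped MatrixOrder in
/-- `(1 - P)ᴴ Q (1 - P) ≤ (T (1 - P))ᴴ (T (1 - P)) = 0` forces `Q^{1/2} (1 - P) = 0`. -/
theorem PosSemidef.mul_eq_self_of_le_mul_self {T Q P : Matrix n n 𝕜} (hT : T.IsHermitian)
    (hQ : Q.PosSemidef) (hQT : (T * T - Q).PosSemidef) (hP : Pᴴ = P) (hTP : T * P = T) :
    Q * P = Q := by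
  set R := hQ.sqrt
  have hRH : Rᴴ = R := hQ.posSemidef_sqrt.1
  have hP' : (1 - P)ᴴ = 1 - P := by rw [conjTranspose_sub, conjTranspose_one, hP]
  have hTP' : T * (1 - P) = 0 := by rw [mul_sub, mul_one, hTP, sub_self]
  have hY : (1 - P)ᴴ * (T * T - Q) * (1 - P) = -((R * (1 - P))ᴴ * (R * (1 - P))) := by
    have : (1 - P)ᴴ * (T * T - Q) * (1 - P)
        = (T * (1 - P))ᴴ * (T * (1 - P)) - (R * (1 - P))ᴴ * (R * (1 - P)) := by
      rw [conjTranspose_mul, conjTranspose_mul, hT.eq, hRH, ← hQ.sqrt_mul_self]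
      noncomm_ring
    rw [this, hTP', mul_zero, zero_sub]
  have hR : R * (1 - P) = 0 := by
    rw [← conjTranspose_mul_self_eq_zero]
    refine le_antisymm ?_ (nonneg_iff_posSemidef.2 (posSemidef_conjTranspose_mul_self _))
    rw [le_iff, zero_sub, ← hY]
    exact hQT.conjTranspose_mul_mul_same (1 - P)
  rw [mul_sub, mul_one, sub_eq_zero] at hR
  rw [← hQ.sqrt_mul_self, Matrix.mul_assoc, ← hR]

theorem IsHermitian.exists_pseudoinverse {T : Matrix n n 𝕜} (hT : T.IsHermitian) :
    ∃ T' : Matrix n n 𝕜, T'ᴴ = T' ∧ T' * T = T * T' ∧ T * T' * T = T := by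
  have hc (f : ℝ → ℝ) : ContinuousOn f (spectrum ℝ T) := finite_real_spectrum.continuousOn f
  have hTsa : IsSelfAdjoint T := hT.isSelfAdjoint
  -- `0⁻¹ = 0` makes `x * x⁻¹ * x = x` hold for every real `x`.
  refine ⟨cfc (·⁻¹ : ℝ → ℝ) T, (cfc_predicate _ T : IsSelfAdjoint _), ?_, ?_⟩
  · calc cfc (·⁻¹ : ℝ → ℝ) T * T = cfc (fun x : ℝ => x⁻¹ * x) T := by
          rw [cfc_mul (·⁻¹) (fun x => x) T (hc _) (hc _), cfc_id' ℝ T]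
      _ = cfc (fun x : ℝ => x * x⁻¹) T := by simp only [mul_comm]
      _ = T * cfc (·⁻¹ : ℝ → ℝ) T := by
          rw [cfc_mul (fun x => x) (·⁻¹) T (hc _) (hc _), cfc_id' ℝ T]
  · calc T * cfc (·⁻¹ : ℝ → ℝ) T * T = cfc (fun x : ℝ => x * x⁻¹ * x) T := by
          rw [cfc_mul (fun x => x * x⁻¹) (fun x => x) T (hc _) (hc _),
            cfc_mul (fun x => x) (·⁻¹) T (hc _) (hc _), cfc_id' ℝ T]
      _ = T := by simp only [mul_inv_mul_cancel]; exact cfc_id' ℝ T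

theorem PosSemidef.exists_conj_eq_of_le_mul_self {T Q : Matrix n n 𝕜} (hT : T.PosSemidef)
    (hQ : Q.PosSemidef) (hQT : (T * T - Q).PosSemidef) :
    ∃ W : Matrix n n 𝕜, W.PosSemidef ∧ (1 - W).PosSemidef ∧ T * W * T = Q := by
  obtain ⟨T', hT'H, hcomm, hTT'T⟩ := hT.1.exists_pseudoinverse
  have hPH : (T * T')ᴴ = T * T' := by rw [conjTranspose_mul, hT'H, hT.1.eq, hcomm]
  have hPP : T * T' * (T * T') = T * T' := by rw [← Matrix.mul_assoc, hTT'T]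
  have hQP : Q * (T * T') = Q :=
    hQ.mul_eq_self_of_le_mul_self hT.1 hQT hPH (by rw [← hcomm, ← Matrix.mul_assoc, hTT'T])
  have hPQ : T * T' * Q = Q := by
    rw [← hPH, ← hQ.1.eq, ← conjTranspose_mul, hQP]
  refine ⟨T' * Q * T', by simpa [hT'H] using hQ.mul_mul_conjTranspose_same T', ?_, ?_⟩
  · have h1P : (1 - T * T').PosSemidef := by
      have : (1 - T * T')ᴴ * (1 - T * T') = 1 - T * T' := by
        rw [conjTranspose_sub, conjTranspose_one, hPH, mul_sub, sub_mul, sub_mul, one_mul,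
          mul_one, one_mul, hPP, sub_self, sub_zero]
      exact this ▸ posSemidef_conjTranspose_mul_self _
    have : 1 - T' * Q * T' = T' * (T * T - Q) * T' + (1 - T * T') := by
      have hT'TTT' : T' * (T * T) * T' = T * T' := by
        calc T' * (T * T) * T' = T' * T * (T * T') := by simp only [Matrix.mul_assoc]
          _ = T * T' := by rw [hcomm, hPP]
      rw [mul_sub, sub_mul, hT'TTT']
      abel
    rw [this]
    exact PosSemidef.add (by simpa [hT'H] using hQT.mul_mul_conjTranspose_same T') h1P
  · calc T * (T' * Q * T') * T = T * T' * Q * (T' * T) := by simp only [Matrix.mul_assoc]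
      _ = Q := by rw [hcomm, hPQ, hQP]

theorem det_one_add_mul_conj_mul_conjTranspose {r : Type*} [Fintype r] [DecidableEq r]
    (H : Matrix r n 𝕜) (T X : Matrix n n 𝕜) :
    (1 + H * (T * X * T) * Hᴴ).det = (1 + X * (T * Hᴴ * H * T)).det := by
  calc (1 + H * (T * X * T) * Hᴴ).det = (1 + (H * T * X) * (T * Hᴴ)).det := by
        simp only [Matrix.mul_assoc]
    _ = (1 + (T * Hᴴ * H * T) * X).det := by
        rw [det_one_add_mul_comm]; simp only [Matrix.mul_assoc]
    _ = (1 + X * (T * Hᴴ * H * T)).det := det_one_add_mul_comm _ _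

theorem eq_conjTranspose_inv_mul_mul_inv {C X Y : Matrix n n 𝕜} (hC : IsUnit C)
    (h : Cᴴ * X * C = Y) : X = (C⁻¹)ᴴ * Y * C⁻¹ := by
  have := hC.invertible
  rw [← h, conjTranspose_nonsing_inv, Matrix.mul_assoc, Matrix.mul_assoc, mul_inv_of_invertible C,
    Matrix.mul_one, inv_mul_cancel_left_of_invertible]

variable [Fintype m] [DecidableEq m]

/-- Both conditions say that the block matrix `[N, E; Eᴴ, 1]` is positive semidefinite. -/
theorem PosDef.posSemidef_one_sub_conjTranspose_mul_inv_mul {N : Matrix n n 𝕜}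
    (E : Matrix n m 𝕜) (hN : N.PosDef) (hE : (N - E * Eᴴ).PosSemidef) :
    (1 - Eᴴ * N⁻¹ * E).PosSemidef := by
  have := hN.isUnit.invertible
  let : Invertible (1 : Matrix m m 𝕜) := invertibleOne
  rw [← hN.fromBlocks₁₁ E 1, PosDef.one.fromBlocks₂₂]
  simpa using hE

theorem PosDef.det_add_mul_mul_conjTranspose_le {N : Matrix n n 𝕜} {E : Matrix n m 𝕜}
    {Δ : Matrix m m 𝕜} (hN : N.PosDef) (hE : (N - E * Eᴴ).PosSemidef) (hΔ : Δ.PosSemidef) :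
    (N + E * Δ * Eᴴ).det ≤ N.det * (1 + Δ).det := by
  set K := Eᴴ * N⁻¹ * E
  set R := hΔ.sqrt
  have hRH : Rᴴ = R := hΔ.posSemidef_sqrt.1
  have hK : K.PosSemidef := hN.inv.posSemidef.conjTranspose_mul_mul_same E
  have hK1 : (1 - K).PosSemidef := hN.posSemidef_one_sub_conjTranspose_mul_inv_mul E hE
  have hdet : (N + E * Δ * Eᴴ).det = N.det * (1 + R * K * R).det := by
    rw [det_add_mul _ _ ((isUnit_iff_isUnit_det N).mp hN.isUnit)]
    congr 1
    calc (1 + Eᴴ * N⁻¹ * (E * Δ)).det = (1 + (K * R) * R).det := by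
          rw [← hΔ.sqrt_mul_self]; simp only [K, R, Matrix.mul_assoc]
      _ = (1 + R * K * R).det := by rw [det_one_add_mul_comm, ← Matrix.mul_assoc]
  rw [hdet]
  refine mul_le_mul_of_nonneg_left (det_le_det_of_posSemidef_sub ?_ ?_) hN.det_pos.le
  · exact PosDef.one.add_posSemidef (by simpa [hRH] using hK.mul_mul_conjTranspose_same R)
  · have : 1 + Δ - (1 + R * K * R) = R * (1 - K) * R := by
      rw [← hΔ.sqrt_mul_self, mul_sub, sub_mul, mul_one]; abel
    rw [this]
    simpa [hRH] using hK1.mul_mul_conjTranspose_same R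

/-- With `F = W^{1/2}` and `E = F Vᴴ`: `1 + F KH F = N + E (Λ - 1) Eᴴ ≤ N + E Δ Eᴴ`, where
`N = 1 + F KG F`, `Δ = (Λ - 1)₊`, and `E Eᴴ = N - (1 - W) ≤ N`. -/
theorem det_one_add_mul_le_mul_prod_max_one {W KG KH V : Matrix n n 𝕜} {lam : n → ℝ}
    (hW : W.PosSemidef) (hW1 : (1 - W).PosSemidef) (hKG : KG.PosSemidef) (hKH : KH.PosSemidef)
    (hGV : KG + 1 = Vᴴ * V) (hHV : KH + 1 = Vᴴ * diagonal (fun i => (lam i : 𝕜)) * V) :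
    (1 + W * KH).det ≤ (1 + W * KG).det * ∏ i, ((max (lam i) 1 : ℝ) : 𝕜) := by
  set F := hW.sqrt
  have hFH : Fᴴ = F := hW.posSemidef_sqrt.1
  have hdet (K : Matrix n n 𝕜) : (1 + W * K).det = (1 + F * K * F).det := by
    rw [← hW.sqrt_mul_self, Matrix.mul_assoc, det_one_add_mul_comm, Matrix.mul_assoc]
  have hNA : (1 + F * KG * F).PosDef :=
    PosDef.one.add_posSemidef (by simpa [hFH] using hKG.mul_mul_conjTranspose_same F)
  have hNB : (1 + F * KH * F).PosDef :=
    PosDef.one.add_posSemidef (by simpa [hFH] using hKH.mul_mul_conjTranspose_same F)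
  set E := F * Vᴴ
  set Δ : Matrix n n 𝕜 := diagonal fun i => ((max (lam i) 1 - 1 : ℝ) : 𝕜)
  have hΔ : Δ.PosSemidef :=
    posSemidef_diagonal_iff.2 fun i => RCLike.ofReal_nonneg.2 (sub_nonneg.2 (le_max_right _ _))
  have hE : (1 + F * KG * F - E * Eᴴ).PosSemidef := by
    have : 1 + F * KG * F - E * Eᴴ = 1 - W := by
      rw [← hW.sqrt_mul_self, eq_sub_of_add_eq hGV]
      simp only [E, conjTranspose_mul, conjTranspose_conjTranspose, hFH]
      noncomm_ring
    rw [this]; exact hW1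
  have hNB_le : (1 + F * KG * F + E * Δ * Eᴴ - (1 + F * KH * F)).PosSemidef := by
    have : 1 + F * KG * F + E * Δ * Eᴴ - (1 + F * KH * F)
        = E * diagonal (fun i => ((max (lam i) 1 - lam i : ℝ) : 𝕜)) * Eᴴ := by
      have hdiag : diagonal (fun i => ((max (lam i) 1 - lam i : ℝ) : 𝕜))
          = 1 + Δ - diagonal (fun i => (lam i : 𝕜)) := by
        rw [← diagonal_one, diagonal_add, diagonal_sub]; congr 1; funext i; push_cast; ring
      rw [hdiag, eq_sub_of_add_eq hGV, eq_sub_of_add_eq hHV]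
      simp only [E, conjTranspose_mul, conjTranspose_conjTranspose, hFH]
      noncomm_ring
    rw [this]
    exact (posSemidef_diagonal_iff.2 fun i => by simp).mul_mul_conjTranspose_same E
  have hdetΔ : (1 + Δ).det = ∏ i, ((max (lam i) 1 : ℝ) : 𝕜) := by
    rw [← diagonal_one, diagonal_add, det_diagonal]; simp
  rw [hdet, hdet, ← hdetΔ]
  exact (hNB.det_le_det_of_posSemidef_sub hNB_le).trans
    (hNA.det_add_mul_mul_conjTranspose_le hE hΔ)

end

section

variable [Fintype m] [DecidableEq m]

/-- The orthogonal projection onto the column space of `A` (when `Aᴴ * A` is invertible). -/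
noncomputable def colProj (A : Matrix n m 𝕜) : Matrix n n 𝕜 := A * (Aᴴ * A)⁻¹ * Aᴴ

theorem posSemidef_colProj {A : Matrix n m 𝕜} (hA : (Aᴴ * A).PosDef) : (colProj A).PosSemidef :=
  hA.inv.posSemidef.mul_mul_conjTranspose_same A

variable [DecidableEq n]

theorem posSemidef_one_sub_colProj {A : Matrix n m 𝕜} (hA : (Aᴴ * A).PosDef) :
    (1 - colProj A).PosSemidef := by
  simpa [colProj] using
    hA.posSemidef_one_sub_conjTranspose_mul_inv_mul Aᴴ (by simpa using PosSemidef.zero)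

theorem det_one_add_colProj_mul {A : Matrix n m 𝕜} (hA : IsUnit (Aᴴ * A).det)
    (K : Matrix n n 𝕜) :
    (1 + colProj A * K).det = ((Aᴴ * A)⁻¹).det * (Aᴴ * (K + 1) * A).det := by
  rw [colProj, Matrix.mul_assoc, Matrix.mul_assoc, det_one_add_mul_comm, ← det_mul]
  congr 1
  rw [Matrix.mul_add, Matrix.mul_one, Matrix.add_mul, Matrix.mul_add, nonsing_inv_mul _ hA]
  simp only [Matrix.mul_assoc, add_comm]

theorem det_one_add_colProj_submatrix_mul_eq_mul_prod {C KG KH : Matrix n n 𝕜} {lam : n → 𝕜}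
    {e : m → n} (he : Function.Injective e) (hC : IsUnit C) (hGC : Cᴴ * (KG + 1) * C = 1)
    (hHC : Cᴴ * (KH + 1) * C = diagonal lam) :
    (1 + colProj (C.submatrix id e) * KH).det
      = (1 + colProj (C.submatrix id e) * KG).det * ∏ j, lam (e j) := by
  have h := (isUnit_iff_isUnit_det _).mp (posDef_conjTranspose_submatrix_mul_self hC he).isUnit
  rw [det_one_add_colProj_mul h, det_one_add_colProj_mul h,
    conjTranspose_submatrix_mul_mul_submatrix, conjTranspose_submatrix_mul_mul_submatrix, hGC, hHC,
    submatrix_one _ he, submatrix_diagonal _ _ he, det_one, mul_one, det_diagonal]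
  rfl

end

end Matrix

open Matrix

theorem prod_castLE_eq_prod_max_one {nt b : ℕ} (hb : b ≤ nt) {lam : Fin nt → ℝ}
    (hgt : ∀ i : Fin nt, (i : ℕ) < b ↔ 1 < lam i) :
    ∏ j : Fin b, lam (Fin.castLE hb j) = ∏ i, max (lam i) 1 := by
  refine Fintype.prod_of_injective _ (Fin.castLE_injective hb) _ _ (fun i hi => ?_) fun j => ?_
  · exact max_eq_right (not_lt.mp fun h => hi ⟨⟨i, (hgt i).mpr h⟩, rfl⟩)
  · exact (max_eq_left ((hgt _).mp j.2).le).symm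

theorem log_prod_max_one {ι : Type*} [Fintype ι] {lam : ι → ℝ} (p : ι → Prop) [DecidablePred p]
    (hp : ∀ i, p i ↔ 1 < lam i) :
    Real.log (∏ i, max (lam i) 1) = ∑ i, if p i then Real.log (lam i) else 0 := by
  rw [Real.log_prod fun i _ => (zero_lt_one.trans_le (le_max_right _ _)).ne']
  refine Finset.sum_congr rfl fun i _ => ?_
  split_ifs with h
  · rw [max_eq_left ((hp i).mp h).le]
  · rw [max_eq_right (not_lt.mp (mt (hp i).mpr h)), Real.log_one]

theorem secrecyRate_eq_log {nr ne nt : ℕ} (H : Matrix (Fin nr) (Fin nt) ℂ)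
    (G : Matrix (Fin ne) (Fin nt) ℂ) {Q : Matrix (Fin nt) (Fin nt) ℂ} (hQ : Q.PosSemidef) {r : ℝ}
    (hr : 0 < r) (h : (1 + H * Q * Hᴴ).det = (1 + G * Q * Gᴴ).det * (r : ℂ)) :
    secrecyRate H G Q = Real.log r := by
  have hG := (PosDef.one.add_posSemidef (hQ.mul_mul_conjTranspose_same G)).det_pos
  rw [Complex.pos_iff] at hG
  rw [secrecyRate, h, Complex.re_mul_ofReal, Real.log_mul hG.1.ne' hr.ne']
  ring

theorem secrecyRate_le_log {nr ne nt : ℕ} (H : Matrix (Fin nr) (Fin nt) ℂ)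
    (G : Matrix (Fin ne) (Fin nt) ℂ) {Q : Matrix (Fin nt) (Fin nt) ℂ} (hQ : Q.PosSemidef) {r : ℝ}
    (hr : 0 < r) (h : (1 + H * Q * Hᴴ).det ≤ (1 + G * Q * Gᴴ).det * (r : ℂ)) :
    secrecyRate H G Q ≤ Real.log r := by
  have hG := (PosDef.one.add_posSemidef (hQ.mul_mul_conjTranspose_same G)).det_pos
  have hH := (PosDef.one.add_posSemidef (hQ.mul_mul_conjTranspose_same H)).det_pos
  rw [Complex.pos_iff] at hG hH
  have hle := (Complex.le_def.mp h).1
  rw [Complex.re_mul_ofReal] at hle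
  rw [secrecyRate, sub_le_iff_le_add, ← Real.log_mul hr.ne' hG.1.ne', mul_comm]
  exact Real.log_le_log hH.1 hle

theorem stmt0_general {nr ne nt b : ℕ} (hb : b ≤ nt)
    (H : Matrix (Fin nr) (Fin nt) ℂ) (G : Matrix (Fin ne) (Fin nt) ℂ)
    (S : Matrix (Fin nt) (Fin nt) ℂ) (hS : S.PosSemidef)
    (C : Matrix (Fin nt) (Fin nt) ℂ) (hC : IsUnit C)
    (lam : Fin nt → ℝ)
    (hgt : ∀ i : Fin nt, (i : ℕ) < b ↔ 1 < lam i)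
    (hGC : Cᴴ * (hS.sqrt * Gᴴ * G * hS.sqrt + 1) * C = 1)
    (hHC : Cᴴ * (hS.sqrt * Hᴴ * H * hS.sqrt + 1) * C
        = Matrix.diagonal fun i => (lam i : ℂ))
    (C₁ : Matrix (Fin nt) (Fin b) ℂ)
    (hC₁ : C₁ = fun i j => C i (Fin.castLE hb j))
    (Qs : Matrix (Fin nt) (Fin nt) ℂ)
    (hQs : Qs = hS.sqrt * C₁ * (C₁ᴴ * C₁)⁻¹ * C₁ᴴ * hS.sqrt) :
    Qs.PosSemidef ∧ (S - Qs).PosSemidef ∧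
    secrecyRate H G Qs
      = (∑ i : Fin nt, if (i : ℕ) < b then Real.log (lam i) else 0) ∧
    ∀ Q : Matrix (Fin nt) (Fin nt) ℂ, Q.IsHermitian → Q.PosSemidef →
      (S - Q).PosSemidef →
      secrecyRate H G Q
        ≤ (∑ i : Fin nt, if (i : ℕ) < b then Real.log (lam i) else 0) := by
  set T := hS.sqrt
  have hT : T.PosSemidef := hS.posSemidef_sqrt
  have hTT : T * T = S := hS.sqrt_mul_self
  have hK {r : ℕ} (X : Matrix (Fin r) (Fin nt) ℂ) : (T * Xᴴ * X * T).PosSemidef := by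
    simpa [hT.1.eq, Matrix.mul_assoc] using posSemidef_conjTranspose_mul_self (X * T)
  replace hC₁ : C₁ = C.submatrix id (Fin.castLE hb) := hC₁
  have hC₁C₁ : (C₁ᴴ * C₁).PosDef :=
    hC₁ ▸ posDef_conjTranspose_submatrix_mul_self hC (Fin.castLE_injective hb)
  replace hQs : Qs = T * colProj C₁ * T := by rw [hQs, colProj]; simp only [Matrix.mul_assoc]
  have hQsPSD : Qs.PosSemidef := by
    simpa [hQs, hT.1.eq] using (posSemidef_colProj hC₁C₁).mul_mul_conjTranspose_same T
  have hr : 0 < ∏ i, max (lam i) 1 :=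
    Finset.prod_pos fun i _ => one_pos.trans_le (le_max_right _ _)
  rw [← log_prod_max_one _ hgt]
  refine ⟨hQsPSD, ?_, ?_, fun Q _ hQ hSQ => ?_⟩
  · have hSQs : S - Qs = T * (1 - colProj C₁) * T := by
      rw [hQs, ← hTT, mul_sub, sub_mul, mul_one]
    simpa [hSQs, hT.1.eq] using (posSemidef_one_sub_colProj hC₁C₁).mul_mul_conjTranspose_same T
  · refine secrecyRate_eq_log H G hQsPSD hr ?_
    rw [hQs, det_one_add_mul_conj_mul_conjTranspose, det_one_add_mul_conj_mul_conjTranspose, hC₁,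
      det_one_add_colProj_submatrix_mul_eq_mul_prod (Fin.castLE_injective hb) hC hGC hHC,
      ← prod_castLE_eq_prod_max_one hb hgt]
    push_cast; rfl
  · obtain ⟨W, hW, hW1, rfl⟩ := hT.exists_conj_eq_of_le_mul_self hQ (hTT ▸ hSQ)
    refine secrecyRate_le_log H G hQ hr ?_
    rw [det_one_add_mul_conj_mul_conjTranspose, det_one_add_mul_conj_mul_conjTranspose]
    push_cast
    exact det_one_add_mul_le_mul_prod_max_one hW hW1 (hK G) (hK H)
      (by simpa using eq_conjTranspose_inv_mul_mul_inv hC hGC)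
      (eq_conjTranspose_inv_mul_mul_inv hC hHC)

theorem stmt0 {nr ne nt b : ℕ} (hb : b ≤ nt)
    (H : Matrix (Fin nr) (Fin nt) ℂ) (G : Matrix (Fin ne) (Fin nt) ℂ)
    (S : Matrix (Fin nt) (Fin nt) ℂ) (hS : S.PosSemidef)
    (C : Matrix (Fin nt) (Fin nt) ℂ) (hC : IsUnit C)
    (lam : Fin nt → ℝ)
    (hanti : Antitone lam)
    (hpos : ∀ i, 0 < lam i)
    (hgt : ∀ i : Fin nt, (i : ℕ) < b ↔ 1 < lam i)
    (hGC : Cᴴ * (hS.sqrt * Gᴴ * G * hS.sqrt + 1) * C = 1)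
    (hHC : Cᴴ * (hS.sqrt * Hᴴ * H * hS.sqrt + 1) * C
        = Matrix.diagonal fun i => (lam i : ℂ))
    (C₁ : Matrix (Fin nt) (Fin b) ℂ)
    (hC₁ : C₁ = fun i j => C i (Fin.castLE hb j))
    (Qs : Matrix (Fin nt) (Fin nt) ℂ)
    (hQs : Qs = hS.sqrt * C₁ * (C₁ᴴ * C₁)⁻¹ * C₁ᴴ * hS.sqrt) :
    Qs.PosSemidef ∧ (S - Qs).PosSemidef ∧
    secrecyRate H G Qs
      = (∑ i : Fin nt, if (i : ℕ) < b then Real.log (lam i) else 0) ∧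
    ∀ Q : Matrix (Fin nt) (Fin nt) ℂ, Q.IsHermitian → Q.PosSemidef →
      (S - Q).PosSemidef →
      secrecyRate H G Q
        ≤ (∑ i : Fin nt, if (i : ℕ) < b then Real.log (lam i) else 0) :=
  stmt0_general hb H G S hS C hC lam hgt hGC hHC C₁ hC₁ Qs hQs
end

section
/- If HᴴH ⪯ GᴴG (i.e., GᴴG − HᴴH is positive semidefinite), then for every n_t×n_t Hermitian positive semidefinite complex matrix Q one has det(I + H Q Hᴴ) ≤ det(I + G Q Gᴴ), i.e., R(Q) ≤ 0; consequently the secrecy capacity is 0 under any power constraint. -/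
/-!
Writing `Q = Sᴴ S`, Sylvester's identity `det (1 + X Y) = det (1 + Y X)` turns
`det (I + H Q Hᴴ)` into `det (I + S Hᴴ H Sᴴ)`, and the congruence `X ↦ S X Sᴴ` preserves
`Hᴴ H ⪯ Gᴴ G`. It remains that `det` is monotone for the Loewner order: if `0 ≺ A ⪯ B` and
`T = A^{1/2}`, then `B = T (I + E) T` with `E = T⁻¹ (B - A) T⁻¹ ⪰ 0`, so
`det B = det A · det (I + E) ≥ det A`, all eigenvalues of `I + E` being at least `1`.
-/

open Matrix
open scoped ComplexOrder

open scoped MatrixOrder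

namespace Matrix

variable {𝕜 m m' n : Type*} [RCLike 𝕜] [Fintype m] [Fintype m'] [Fintype n]
  [DecidableEq m] [DecidableEq n]

theorem PosSemidef.one_le_det_one_add_s1 {E : Matrix n n 𝕜} (hE : E.PosSemidef) :
    1 ≤ (1 + E).det := by
  have hcfc : 1 + E = cfc (fun x : ℝ => 1 + x) E := by
    rw [cfc_const_add (1 : ℝ) (fun x => x) E (ha := hE.1.isSelfAdjoint),
      cfc_id' ℝ E (ha := hE.1.isSelfAdjoint), map_one]
  rw [hcfc, hE.1.cfc_eq]
  simp only [IsHermitian.cfc, det_map, det_diagonal, Function.comp_apply, map_add, map_one]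
  refine Finset.one_le_prod fun i _ => le_add_of_nonneg_right ?_
  simpa using hE.eigenvalues_nonneg i

theorem PosSemidef.det_le_det {A B : Matrix n n 𝕜} (hA : A.PosSemidef) (hAB : A ≤ B) :
    A.det ≤ B.det := by
  by_cases hdef : A.PosDef
  swap
  · have hdet : A.det = 0 := by simpa [hA.posDef_iff_det_ne_zero] using hdef
    rw [hdet]
    simpa using (hA.add (le_iff.mp hAB)).det_nonneg
  set T := CFC.sqrt A
  have hT : T.IsHermitian := (CFC.sqrt_nonneg A).posSemidef.1
  have hTT : T * T = A := CFC.sqrt_mul_sqrt_self A hA.nonneg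
  have hdetT : IsUnit T.det :=
    (isUnit_iff_isUnit_det T).mp (isUnit_of_mul_isUnit_left (hTT ▸ hdef.isUnit))
  set E := T⁻¹ * (B - A) * T⁻¹
  have hE : E.PosSemidef := by
    simpa [conjTranspose_nonsing_inv, hT.eq] using
      (le_iff.mp hAB).conjTranspose_mul_mul_same T⁻¹
  have hB : B = T * (1 + E) * T := by
    simp only [E, Matrix.mul_add, Matrix.add_mul, Matrix.mul_one, hTT, Matrix.mul_assoc,
      nonsing_inv_mul _ hdetT, mul_nonsing_inv_cancel_left _ _ hdetT, add_sub_cancel]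
  calc A.det = A.det * 1 := (mul_one _).symm
    _ ≤ A.det * (1 + E).det := mul_le_mul_of_nonneg_left hE.one_le_det_one_add_s1 hA.det_nonneg
    _ = B.det := by rw [hB, det_mul_right_comm, hTT, det_mul]

theorem det_one_add_mul_star_mul_mul_conjTranspose (M : Matrix m n 𝕜) (S : Matrix n n 𝕜) :
    (1 + M * (star S * S) * Mᴴ).det = (1 + S * (Mᴴ * M) * star S).det := by
  rw [← Matrix.mul_assoc M, Matrix.mul_assoc _ S, det_one_add_mul_comm]
  simp only [Matrix.mul_assoc]

theorem det_one_add_mul_mul_conjTranspose_le [DecidableEq m'] {Q : Matrix n n 𝕜}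
    (hQ : Q.PosSemidef) {H : Matrix m n 𝕜} {G : Matrix m' n 𝕜} (hHG : Hᴴ * H ≤ Gᴴ * G) :
    (1 + H * Q * Hᴴ).det ≤ (1 + G * Q * Gᴴ).det := by
  obtain ⟨S, rfl⟩ := CStarAlgebra.nonneg_iff_eq_star_mul_self.mp hQ.nonneg
  rw [det_one_add_mul_star_mul_mul_conjTranspose, det_one_add_mul_star_mul_mul_conjTranspose]
  exact (PosSemidef.one.add
      ((posSemidef_conjTranspose_mul_self H).mul_mul_conjTranspose_same S)).det_le_det
    (add_le_add_right (star_right_conjugate_le_conjugate hHG S) 1)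

end Matrix

/-- If `HᴴH ⪯ GᴴG` then `R(Q) ≤ 0` for every PSD `Q`:
the secrecy capacity is zero under any power constraint. -/
theorem stmt1 {nr ne nt : ℕ}
    (H : Matrix (Fin nr) (Fin nt) ℂ) (G : Matrix (Fin ne) (Fin nt) ℂ)
    (hHG : (Gᴴ * G - Hᴴ * H).PosSemidef) :
    ∀ Q : Matrix (Fin nt) (Fin nt) ℂ, Q.IsHermitian → Q.PosSemidef →
      (1 + H * Q * Hᴴ).det.re ≤ (1 + G * Q * Gᴴ).det.re ∧
      secrecyRate H G Q ≤ 0 := by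
  intro Q _ hQ
  have hdet := det_one_add_mul_mul_conjTranspose_le hQ (le_iff.mpr hHG)
  have hpos : 0 < (1 + H * Q * Hᴴ).det :=
    zero_lt_one.trans_le (hQ.mul_mul_conjTranspose_same H).one_le_det_one_add_s1
  have hre : (1 + H * Q * Hᴴ).det.re ≤ (1 + G * Q * Gᴴ).det.re := (Complex.le_def.mp hdet).1
  exact ⟨hre, sub_nonpos.mpr (Real.log_le_log (Complex.pos_iff.mp hpos).1 hre)⟩
end

section
/- Let M be an n×n Hermitian complex matrix and let m be the number of positive eigenvalues of M (counted with multiplicity). For any n×n complex matrix B, if BᴴM B is positive semidefinite, then rank(BᴴM B) ≤ m. -/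
/-!
Let `P` be the positive part of `M`, obtained by replacing its negative eigenvalues by `0`.
Then `M ≤ P` in the Loewner order, hence `0 ≤ BᴴMB ≤ BᴴPB`. Between positive semidefinite
matrices `A ≤ C` forces `ker C ⊆ ker A`, since `x*Ax` is squeezed between `0` and `x*Cx`;
so `rank(BᴴMB) ≤ rank(BᴴPB) ≤ rank P`, and `rank P` is the number of positive eigenvalues of `M`.
-/
open Matrix
open scoped ComplexOrder MatrixOrder

namespace Matrix

theorem rank_le_rank_of_ker_mulVecLin_le {R m k n : Type*} [Field R] [Fintype n]
    {A : Matrix m n R} {C : Matrix k n R}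
    (h : LinearMap.ker C.mulVecLin ≤ LinearMap.ker A.mulVecLin) : A.rank ≤ C.rank := by
  have hA := A.mulVecLin.finrank_range_add_finrank_ker
  have hC := C.mulVecLin.finrank_range_add_finrank_ker
  have := Submodule.finrank_mono h
  rw [rank, rank]
  omega

variable {𝕜 n : Type*} [RCLike 𝕜] [Fintype n]

theorem PosSemidef.ker_mulVecLin_le_of_le {A C : Matrix n n 𝕜} (hA : A.PosSemidef) (hAC : A ≤ C) :
    LinearMap.ker C.mulVecLin ≤ LinearMap.ker A.mulVecLin := by
  intro x hx
  rw [LinearMap.mem_ker, mulVecLin_apply] at hx ⊢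
  have hgap := (le_iff.mp hAC).dotProduct_mulVec_nonneg x
  rw [sub_mulVec, hx, zero_sub, dotProduct_neg, neg_nonneg] at hgap
  exact (hA.dotProduct_mulVec_zero_iff x).mp (le_antisymm hgap (hA.dotProduct_mulVec_nonneg x))

theorem PosSemidef.rank_le_of_le {A C : Matrix n n 𝕜} (hA : A.PosSemidef) (hAC : A ≤ C) :
    A.rank ≤ C.rank :=
  rank_le_rank_of_ker_mulVecLin_le (hA.ker_mulVecLin_le_of_le hAC)

variable [DecidableEq n]

theorem IsHermitian.rank_cfc {A : Matrix n n 𝕜} (hA : A.IsHermitian) (f : ℝ → ℝ) :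
    (cfc f A).rank = Fintype.card {i // f (hA.eigenvalues i) ≠ 0} := by
  classical
  rw [hA.cfc_eq, IsHermitian.cfc, Unitary.conjStarAlgAut_apply, ← Unitary.coe_star]
  simp [-isUnit_iff_ne_zero, -Unitary.coe_star, rank_diagonal]

theorem IsHermitian.le_cfc_max_zero {A : Matrix n n 𝕜} (hA : A.IsHermitian) :
    A ≤ cfc (fun x : ℝ => max x 0) A := by
  conv_lhs => rw [← cfc_id' ℝ A]
  exact cfc_mono fun x _ => le_max_left x 0

theorem IsHermitian.rank_conjTranspose_mul_mul_le_card_pos {k : Type*} [Fintype k]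
    {M : Matrix n n 𝕜} (hM : M.IsHermitian) (B : Matrix n k 𝕜) (hB : (Bᴴ * M * B).PosSemidef) :
    (Bᴴ * M * B).rank ≤ Fintype.card {i // 0 < hM.eigenvalues i} := by
  set P := cfc (fun x : ℝ => max x 0) M
  have hle : Bᴴ * M * B ≤ Bᴴ * P * B := by
    rw [le_iff, ← Matrix.sub_mul, ← Matrix.mul_sub]
    exact (le_iff.mp hM.le_cfc_max_zero).conjTranspose_mul_mul_same B
  calc (Bᴴ * M * B).rank ≤ (Bᴴ * P * B).rank := hB.rank_le_of_le hle
    _ ≤ P.rank := (rank_mul_le_left _ _).trans (rank_mul_le_right _ _)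
    _ = Fintype.card {i // max (hM.eigenvalues i) 0 ≠ 0} := hM.rank_cfc _
    _ = Fintype.card {i // 0 < hM.eigenvalues i} :=
      Fintype.card_congr <| Equiv.subtypeEquivRight fun i => by grind

end Matrix

/-- If `M` is Hermitian with `m` positive eigenvalues (with multiplicity) and
`BᴴMB` is PSD, then `rank(BᴴMB) ≤ m`. -/
theorem stmt5 {n : ℕ}
    (M : Matrix (Fin n) (Fin n) ℂ) (hM : M.IsHermitian)
    (m : ℕ) (hm : m = (Finset.univ.filter fun i => 0 < hM.eigenvalues i).card)
    (B : Matrix (Fin n) (Fin n) ℂ)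
    (hPSD : (Bᴴ * M * B).PosSemidef) :
    (Bᴴ * M * B).rank ≤ m := by
  rw [hm, ← Fintype.card_subtype]
  exact hM.rank_conjTranspose_mul_mul_le_card_pos B hPSD
end

section
/- Suppose HᴴH ⪰ GᴴG (i.e., HᴴH − GᴴG is positive semidefinite). Then the secrecy rate function R is concave on the cone of Hermitian positive semidefinite matrices: for all Hermitian positive semidefinite n_t×n_t matrices Q_1, Q_2 and all t ∈ [0,1], R(t Q_1 + (1−t) Q_2) ≥ t R(Q_1) + (1−t) R(Q_2). -/
/-!
Write `HᴴH = GᴴG + BᴴB`. Sylvester's identity `det (1 + XY) = det (1 + YX)` factors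
`det (1 + HQHᴴ) = det (1 + GQGᴴ) · det (1 + B W(Q) Bᴴ)` with `W(Q) = Q - QGᴴ(1 + GQGᴴ)⁻¹GQ`,
so `R(Q) = log det (1 + B W(Q) Bᴴ)`. The map `W` is operator concave on the PSD cone because
`(A, X) ↦ Xᴴ A⁻¹ X` is jointly operator convex (a Schur complement argument), and `log det` is
monotone and concave on positive definite matrices: a congruence reduces both facts to `A = 1`,
where they follow from the monotonicity and concavity of `log` on the eigenvalues.
-/

open Matrix
open scoped ComplexOrder

open Set
open scoped MatrixOrder

theorem ConcaveOn.comp_of_mapsTo {𝕜 E F β : Type*} [Semiring 𝕜] [PartialOrder 𝕜]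
    [AddCommMonoid E] [AddCommMonoid F] [AddCommMonoid β] [PartialOrder F] [PartialOrder β]
    [SMul 𝕜 E] [SMul 𝕜 F] [SMul 𝕜 β] {s : Set E} {t : Set F} {f : E → F} {g : F → β}
    (hg : ConcaveOn 𝕜 t g) (hf : ConcaveOn 𝕜 s f) (hg' : MonotoneOn g t) (hst : MapsTo f s t) :
    ConcaveOn 𝕜 s (g ∘ f) :=
  ⟨hf.1, fun _ hx _ hy _ _ ha hb hab =>
    (hg.2 (hst hx) (hst hy) ha hb hab).trans <|
      hg' (hg.1 (hst hx) (hst hy) ha hb hab) (hst (hf.1 hx hy ha hb hab)) (hf.2 hx hy ha hb hab)⟩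

lemma IsUnit.exists_eq_star_mul_mul {R : Type*} [Monoid R] [StarMul R] {y : R} (hy : IsUnit y)
    (M : R) : ∃ N, M = star y * N * y := by
  obtain ⟨u, rfl⟩ := hy
  refine ⟨star (↑u⁻¹ : R) * M * ↑u⁻¹, ?_⟩
  simp only [mul_assoc, Units.inv_mul, mul_one]
  rw [← mul_assoc, ← star_mul, Units.inv_mul, star_one, one_mul]

namespace Matrix

lemma convex_setOf_posSemidef {n : Type*} : Convex ℝ {A : Matrix n n ℂ | A.PosSemidef} :=
  fun _ hA _ hB _ _ ha hb _ => (hA.smul ha).add (hB.smul hb)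

lemma convex_setOf_posDef {n : Type*} : Convex ℝ {A : Matrix n n ℂ | A.PosDef} := by
  intro A hA B hB a b ha hb hab
  rcases ha.eq_or_lt with rfl | ha
  · simpa [show b = 1 by linarith] using hB
  · exact (hA.smul ha).add_posSemidef (hB.posSemidef.smul hb)

lemma det_one_add_mul_mul_comm {R m n : Type*} [CommRing R] [Fintype m] [Fintype n]
    [DecidableEq m] [DecidableEq n] (X : Matrix m n R) (M : Matrix n n R) (Y : Matrix n m R) :
    (1 + X * M * Y).det = (1 + M * (Y * X)).det := by
  rw [Matrix.mul_assoc, det_one_add_mul_comm, Matrix.mul_assoc]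

lemma IsHermitian.det_cfc {n 𝕜 : Type*} [Fintype n] [DecidableEq n] [RCLike 𝕜]
    {A : Matrix n n 𝕜} (hA : A.IsHermitian) (f : ℝ → ℝ) :
    (cfc f A).det = ∏ i, (f (hA.eigenvalues i) : 𝕜) := by
  simp [hA.cfc_eq, IsHermitian.cfc, det_diagonal, -Unitary.conjStarAlgAut_apply]

variable {l m n : Type*} [Fintype l] [Fintype m] [Fintype n]

lemma PosSemidef.posDef_one_add_mul_mul_conjTranspose [DecidableEq m] {Q : Matrix n n ℂ}
    (hQ : Q.PosSemidef) (G : Matrix m n ℂ) : (1 + G * Q * Gᴴ).PosDef :=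
  PosDef.one.add_posSemidef (hQ.mul_mul_conjTranspose_same G)

lemma convexOn_conjTranspose_mul_inv_mul [DecidableEq m] :
    ConvexOn ℝ ({A : Matrix m m ℂ | A.PosDef} ×ˢ univ)
      (fun p : Matrix m m ℂ × Matrix m n ℂ => p.2ᴴ * p.1⁻¹ * p.2) := by
  refine ⟨convex_setOf_posDef.prod convex_univ, ?_⟩
  rintro ⟨A₁, B₁⟩ ⟨hA₁, -⟩ ⟨A₂, B₂⟩ ⟨hA₂, -⟩ a b ha hb hab
  have hA : (a • A₁ + b • A₂).PosDef := convex_setOf_posDef hA₁ hA₂ ha hb hab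
  -- Each `fromBlocks A B Bᴴ (Bᴴ A⁻¹ B)` is PSD (zero Schur complement); the Schur complement
  -- of their average is the desired difference.
  have hblock : ∀ {A : Matrix m m ℂ} (B : Matrix m n ℂ), A.PosDef →
      (fromBlocks A B Bᴴ (Bᴴ * A⁻¹ * B)).PosSemidef := fun B hA => by
    have := hA.isUnit.invertible
    rw [PosDef.fromBlocks₁₁ B _ hA, sub_self]
    exact .zero
  have hsum := ((hblock B₁ hA₁).smul ha).add ((hblock B₂ hA₂).smul hb)
  have hB : (a • B₁ + b • B₂)ᴴ = a • B₁ᴴ + b • B₂ᴴ := by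
    simp only [conjTranspose_add, conjTranspose_smul, star_trivial]
  rw [fromBlocks_smul, fromBlocks_smul, fromBlocks_add, ← hB] at hsum
  have := hA.isUnit.invertible
  exact (PosDef.fromBlocks₁₁ _ _ hA).mp hsum

variable [DecidableEq n]

/-- Only meaningful when `A.det` is a positive real, e.g. for positive definite `A`. -/
noncomputable def logDet (A : Matrix n n ℂ) : ℝ := Real.log A.det.re

lemma logDet_eq_add_of_det_eq_mul [DecidableEq l] [DecidableEq m] {A : Matrix n n ℂ}
    {B : Matrix l l ℂ} {C : Matrix m m ℂ} (h : A.det = B.det * C.det) (hB : 0 < B.det)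
    (hC : 0 < C.det) : logDet A = logDet B + logDet C := by
  obtain ⟨hB_re, hB_im⟩ := Complex.lt_def.mp hB
  obtain ⟨hC_re, -⟩ := Complex.lt_def.mp hC
  simp only [Complex.zero_re, Complex.zero_im] at hB_re hB_im hC_re
  rw [logDet, h, Complex.mul_re, ← hB_im, zero_mul, sub_zero,
    Real.log_mul hB_re.ne' hC_re.ne', logDet, logDet]

lemma logDet_star_mul_mul {y M : Matrix n n ℂ} (hy : (star y * y).PosDef) (hM : M.PosDef) :
    logDet (star y * M * y) = logDet (star y * y) + logDet M := by
  refine logDet_eq_add_of_det_eq_mul ?_ hy.det_pos hM.det_pos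
  simp only [det_mul]
  ring

lemma IsHermitian.logDet_eq_sum {A : Matrix n n ℂ} (hA : A.IsHermitian)
    (h : ∀ i, hA.eigenvalues i ≠ 0) : logDet A = ∑ i, Real.log (hA.eigenvalues i) := by
  rw [logDet, hA.det_eq_prod_eigenvalues, ← RCLike.ofReal_prod, ← Real.log_prod fun i _ => h i]
  rfl

lemma IsHermitian.logDet_smul_one_add_smul {C : Matrix n n ℂ} (hC : C.IsHermitian) {a b : ℝ}
    (h : ∀ i, a + b * hC.eigenvalues i ≠ 0) :
    logDet (a • 1 + b • C) = ∑ i, Real.log (a + b * hC.eigenvalues i) := by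
  have hcfc : a • 1 + b • C = cfc (fun x => a + b * x) C := by
    rw [cfc_add .., cfc_const .., cfc_const_mul .., cfc_id' .., Algebra.algebraMap_eq_smul_one]
  rw [hcfc, logDet, hC.det_cfc, ← RCLike.ofReal_prod, ← Real.log_prod fun i _ => h i]
  rfl

lemma PosSemidef.logDet_one_add_nonneg {N : Matrix n n ℂ} (hN : N.PosSemidef) :
    0 ≤ logDet (1 + N) := by
  have h := hN.1.logDet_smul_one_add_smul (a := 1) (b := 1)
    fun i => by linarith [hN.eigenvalues_nonneg i]
  rw [one_smul, one_smul] at h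
  rw [h]
  exact Finset.sum_nonneg fun i _ => Real.log_nonneg (by linarith [hN.eigenvalues_nonneg i])

lemma PosDef.exists_isUnit_eq_star_mul_self {A : Matrix n n ℂ} (hA : A.PosDef) :
    ∃ y, IsUnit y ∧ A = star y * y :=
  CStarAlgebra.isStrictlyPositive_iff_eq_star_mul_self.mp hA.isStrictlyPositive

lemma logDet_le_logDet_add {A Z : Matrix n n ℂ} (hA : A.PosDef) (hZ : Z.PosSemidef) :
    logDet A ≤ logDet (A + Z) := by
  obtain ⟨y, hy, rfl⟩ := hA.exists_isUnit_eq_star_mul_self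
  obtain ⟨N, rfl⟩ := hy.exists_eq_star_mul_mul Z
  have hN : N.PosSemidef := (IsUnit.posSemidef_star_left_conjugate_iff hy).mp hZ
  have hsum : star y * y + star y * N * y = star y * (1 + N) * y := by
    rw [mul_add, add_mul, mul_one]
  rw [hsum, logDet_star_mul_mul hA (PosDef.one.add_posSemidef hN), le_add_iff_nonneg_right]
  exact hN.logDet_one_add_nonneg

lemma concaveOn_logDet : ConcaveOn ℝ {A : Matrix n n ℂ | A.PosDef} logDet := by
  refine ⟨convex_setOf_posDef, ?_⟩
  rintro A (hA : A.PosDef) B (hB : B.PosDef) a b ha hb hab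
  obtain ⟨y, hy, rfl⟩ := hA.exists_isUnit_eq_star_mul_self
  obtain ⟨C, rfl⟩ := hy.exists_eq_star_mul_mul B
  have hC : C.PosDef := (IsUnit.posDef_star_left_conjugate_iff hy).mp hB
  have hcomb : a • (star y * y) + b • (star y * C * y) = star y * (a • 1 + b • C) * y := by
    simp only [mul_add, add_mul, Matrix.mul_smul, Matrix.smul_mul, mul_one]
  have hpos : ∀ i, 0 < a + b * hC.1.eigenvalues i := fun i => by
    rcases ha.eq_or_lt with rfl | ha
    · simpa [show b = 1 by linarith] using hC.eigenvalues_pos i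
    · exact add_pos_of_pos_of_nonneg ha (mul_nonneg hb (hC.eigenvalues_pos i).le)
  rw [smul_eq_mul, smul_eq_mul, hcomb,
    logDet_star_mul_mul hA (convex_setOf_posDef PosDef.one hC ha hb hab),
    logDet_star_mul_mul hA hC, hC.1.logDet_smul_one_add_smul fun i => (hpos i).ne',
    hC.1.logDet_eq_sum fun i => (hC.eigenvalues_pos i).ne']
  have hlog : ∀ i, b * Real.log (hC.1.eigenvalues i) ≤ Real.log (a + b * hC.1.eigenvalues i) :=
    fun i => by
      simpa using strictConcaveOn_log_Ioi.concaveOn.2 (mem_Ioi.2 one_pos)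
        (mem_Ioi.2 (hC.eigenvalues_pos i)) ha hb hab
  have hsum := Finset.sum_le_sum fun i (_ : i ∈ Finset.univ) => hlog i
  rw [← Finset.mul_sum] at hsum
  linear_combination hsum + logDet (star y * y) * hab

end Matrix

section Mmse

variable {l m n : Type*} [Fintype l] [Fintype m] [Fintype n] [DecidableEq m]

/-- The error covariance of the linear MMSE estimate of `x ∼ 𝒞𝒩(0, Q)` from `G x + 𝒞𝒩(0, 1)`;
for invertible `Q` it equals `(Q⁻¹ + Gᴴ G)⁻¹`. -/
noncomputable def mmseCov (G : Matrix m n ℂ) (Q : Matrix n n ℂ) : Matrix n n ℂ :=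
  Q - (G * Q)ᴴ * (1 + G * Q * Gᴴ)⁻¹ * (G * Q)

lemma concaveOn_mmseCov (G : Matrix m n ℂ) :
    ConcaveOn ℝ {Q : Matrix n n ℂ | Q.PosSemidef} (mmseCov G) := by
  refine ⟨convex_setOf_posSemidef, fun Q₁ hQ₁ Q₂ hQ₂ a b ha hb hab => ?_⟩
  have h := convexOn_conjTranspose_mul_inv_mul.2
    (mk_mem_prod (hQ₁.posDef_one_add_mul_mul_conjTranspose G) (mem_univ (G * Q₁)))
    (mk_mem_prod (hQ₂.posDef_one_add_mul_mul_conjTranspose G) (mem_univ (G * Q₂)))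
    ha hb hab
  have hcomb : a • (1 + G * Q₁ * Gᴴ, G * Q₁) + b • (1 + G * Q₂ * Gᴴ, G * Q₂)
      = (1 + G * (a • Q₁ + b • Q₂) * Gᴴ, G * (a • Q₁ + b • Q₂)) := by
    simp only [Prod.smul_mk, Prod.mk_add_mk, smul_add, Matrix.mul_add, Matrix.add_mul,
      Matrix.mul_smul, Matrix.smul_mul]
    rw [add_add_add_comm, ← add_smul, hab, one_smul]
  rw [hcomb, le_iff] at h
  rw [le_iff]
  convert h using 1
  simp only [mmseCov, smul_sub]
  abel

variable [DecidableEq n]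

lemma posSemidef_mmseCov {Q : Matrix n n ℂ} (hQ : Q.PosSemidef) (G : Matrix m n ℂ) :
    (mmseCov G Q).PosSemidef := by
  have hS := hQ.posDef_one_add_mul_mul_conjTranspose G
  have := hS.isUnit.invertible
  have hblock : fromBlocks (1 + G * Q * Gᴴ) (G * Q) (G * Q)ᴴ Q
      = fromRows (1 : Matrix m m ℂ) (0 : Matrix n m ℂ) * (fromRows (1 : Matrix m m ℂ) 0)ᴴ
        + fromRows G 1 * Q * (fromRows G 1)ᴴ := by
    rw [conjTranspose_fromRows_eq_fromCols_conjTranspose,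
      conjTranspose_fromRows_eq_fromCols_conjTranspose, fromRows_mul_fromCols, fromRows_mul,
      fromRows_mul_fromCols, fromBlocks_add, conjTranspose_mul, hQ.1.eq]
    simp
  rw [mmseCov, ← PosDef.fromBlocks₁₁ _ _ hS, hblock]
  exact (posSemidef_self_mul_conjTranspose _).add (hQ.mul_mul_conjTranspose_same _)

lemma one_add_mul_conjTranspose_mul_self_mul_mmseCov {Q : Matrix n n ℂ} (hQ : Q.IsHermitian)
    {G : Matrix m n ℂ} (hS : IsUnit (1 + G * Q * Gᴴ).det) :
    (1 + Q * (Gᴴ * G)) * mmseCov G Q = Q := by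
  have hpush : (1 + Q * (Gᴴ * G)) * (G * Q)ᴴ = (G * Q)ᴴ * (1 + G * Q * Gᴴ) := by
    rw [conjTranspose_mul, hQ.eq]
    simp only [Matrix.add_mul, Matrix.mul_add, Matrix.one_mul, Matrix.mul_one, Matrix.mul_assoc]
  have hcorr : (1 + Q * (Gᴴ * G)) * ((G * Q)ᴴ * (1 + G * Q * Gᴴ)⁻¹ * (G * Q))
      = Q * (Gᴴ * G) * Q :=
    calc _ = (1 + Q * (Gᴴ * G)) * (G * Q)ᴴ * (1 + G * Q * Gᴴ)⁻¹ * (G * Q) := by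
          simp only [Matrix.mul_assoc]
      _ = (G * Q)ᴴ * ((1 + G * Q * Gᴴ) * (1 + G * Q * Gᴴ)⁻¹) * (G * Q) := by
          rw [hpush]
          simp only [Matrix.mul_assoc]
      _ = Q * (Gᴴ * G) * Q := by
          rw [mul_nonsing_inv _ hS, Matrix.mul_one, conjTranspose_mul, hQ.eq]
          simp only [Matrix.mul_assoc]
  rw [mmseCov, Matrix.mul_sub, hcorr, Matrix.add_mul, Matrix.one_mul, add_sub_cancel_right]

lemma det_one_add_mul_mul_conjTranspose_eq_det_mul_det [DecidableEq l] {k : Type*} [Fintype k]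
    [DecidableEq k] {H : Matrix l n ℂ} {G : Matrix m n ℂ} {B : Matrix k n ℂ}
    (hHGB : Hᴴ * H = Gᴴ * G + Bᴴ * B)
    {Q : Matrix n n ℂ} (hQ : Q.IsHermitian) (hS : IsUnit (1 + G * Q * Gᴴ).det) :
    (1 + H * Q * Hᴴ).det = (1 + G * Q * Gᴴ).det * (1 + B * mmseCov G Q * Bᴴ).det := by
  rw [det_one_add_mul_mul_comm, det_one_add_mul_mul_comm, det_one_add_mul_mul_comm, ← det_mul]
  congr 1
  rw [Matrix.mul_add, Matrix.mul_one, ← Matrix.mul_assoc (1 + Q * (Gᴴ * G)),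
    one_add_mul_conjTranspose_mul_self_mul_mmseCov hQ hS, hHGB, Matrix.mul_add, add_assoc]

end Mmse

section LogDetOneAdd

variable {k n : Type*} [Fintype k] [Fintype n] [DecidableEq k]

lemma concaveOn_logDet_one_add_mul_mul_conjTranspose (B : Matrix k n ℂ) :
    ConcaveOn ℝ {M : Matrix n n ℂ | M.PosSemidef} (fun M => logDet (1 + B * M * Bᴴ)) := by
  refine ⟨convex_setOf_posSemidef, fun M₁ hM₁ M₂ hM₂ a b ha hb hab => ?_⟩
  have h := concaveOn_logDet.2 (hM₁.posDef_one_add_mul_mul_conjTranspose B)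
    (hM₂.posDef_one_add_mul_mul_conjTranspose B) ha hb hab
  have hcomb :
      a • (1 + B * M₁ * Bᴴ) + b • (1 + B * M₂ * Bᴴ) = 1 + B * (a • M₁ + b • M₂) * Bᴴ := by
    simp only [smul_add, Matrix.mul_add, Matrix.add_mul, Matrix.mul_smul, Matrix.smul_mul]
    rw [add_add_add_comm, ← add_smul, hab, one_smul]
  rwa [hcomb] at h

lemma monotoneOn_logDet_one_add_mul_mul_conjTranspose (B : Matrix k n ℂ) :
    MonotoneOn (fun M => logDet (1 + B * M * Bᴴ)) {M : Matrix n n ℂ | M.PosSemidef} := by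
  intro M₁ hM₁ M₂ _ hM
  have h : 1 + B * M₂ * Bᴴ = (1 + B * M₁ * Bᴴ) + B * (M₂ - M₁) * Bᴴ := by
    simp only [Matrix.mul_sub, Matrix.sub_mul]
    abel
  simpa only [h] using logDet_le_logDet_add (hM₁.posDef_one_add_mul_mul_conjTranspose B)
    ((le_iff.mp hM).mul_mul_conjTranspose_same B)

end LogDetOneAdd

lemma secrecyRate_eq_logDet_mmseCov {nr ne nt : ℕ} {k : Type*} [Fintype k] [DecidableEq k]
    {H : Matrix (Fin nr) (Fin nt) ℂ} {G : Matrix (Fin ne) (Fin nt) ℂ} {B : Matrix k (Fin nt) ℂ}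
    (hHGB : Hᴴ * H = Gᴴ * G + Bᴴ * B) {Q : Matrix (Fin nt) (Fin nt) ℂ} (hQ : Q.PosSemidef) :
    secrecyRate H G Q = logDet (1 + B * mmseCov G Q * Bᴴ) := by
  have hS := hQ.posDef_one_add_mul_mul_conjTranspose G
  have hW := (posSemidef_mmseCov hQ G).posDef_one_add_mul_mul_conjTranspose B
  have h : logDet (1 + H * Q * Hᴴ)
      = logDet (1 + G * Q * Gᴴ) + logDet (1 + B * mmseCov G Q * Bᴴ) :=
    logDet_eq_add_of_det_eq_mul
      (det_one_add_mul_mul_conjTranspose_eq_det_mul_det hHGB hQ.1 hS.det_pos.ne'.isUnit)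
      hS.det_pos hW.det_pos
  change logDet _ - logDet _ = _
  rw [h, add_sub_cancel_left]

theorem concaveOn_secrecyRate {nr ne nt : ℕ}
    (H : Matrix (Fin nr) (Fin nt) ℂ) (G : Matrix (Fin ne) (Fin nt) ℂ)
    (hHG : (Hᴴ * H - Gᴴ * G).PosSemidef) :
    ConcaveOn ℝ {Q : Matrix (Fin nt) (Fin nt) ℂ | Q.PosSemidef} (secrecyRate H G) := by
  obtain ⟨B, hB⟩ := CStarAlgebra.nonneg_iff_eq_star_mul_self.mp hHG.nonneg
  have hHGB : Hᴴ * H = Gᴴ * G + Bᴴ * B := by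
    rw [← star_eq_conjTranspose, ← hB]
    abel
  refine ConcaveOn.congr ?_ fun Q hQ => (secrecyRate_eq_logDet_mmseCov hHGB hQ).symm
  exact (concaveOn_logDet_one_add_mul_mul_conjTranspose B).comp_of_mapsTo (concaveOn_mmseCov G)
    (monotoneOn_logDet_one_add_mul_mul_conjTranspose B) fun Q hQ => posSemidef_mmseCov hQ G

/-- If `HᴴH ⪰ GᴴG`, the secrecy rate is concave on the PSD cone. -/
theorem stmt9 {nr ne nt : ℕ}
    (H : Matrix (Fin nr) (Fin nt) ℂ) (G : Matrix (Fin ne) (Fin nt) ℂ)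
    (hHG : (Hᴴ * H - Gᴴ * G).PosSemidef) :
    ∀ Q₁ Q₂ : Matrix (Fin nt) (Fin nt) ℂ, Q₁.PosSemidef → Q₂.PosSemidef →
      ∀ t : ℝ, 0 ≤ t → t ≤ 1 →
      t * secrecyRate H G Q₁ + (1 - t) * secrecyRate H G Q₂
        ≤ secrecyRate H G ((t : ℂ) • Q₁ + ((1 - t : ℝ) : ℂ) • Q₂) := by
  intro Q₁ Q₂ hQ₁ hQ₂ t ht₀ ht₁
  simpa only [smul_eq_mul, Complex.coe_smul] using
    (concaveOn_secrecyRate H G hHG).2 hQ₁ hQ₂ ht₀ (sub_nonneg.2 ht₁) (add_sub_cancel t 1)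
end

section
/- In the setting of the optimal full-rank covariance construction (HᴴH − GᴴG ≻ 0, GᴴG ≻ 0, S̄ = (HᴴH − GᴴG)^{-1}, S̄^{1/2}GᴴG S̄^{1/2} + I = ΦDΦᴴ with Φ unitary and D = diag(d_1,…,d_{n_t}) diagonal, Σ̄ = (I − D^{-1})^{-1/2}D^{-1}ΦᴴS̄ΦD^{-1}(I − D^{-1})^{-1/2} = UΩUᴴ with U unitary and Ω = diag(ω_i) positive definite, μ > 0, Λ_1 = diag(λ_{i,1}) with λ_{i,1} = (−1+√(1+4/(μω_i)))/2, Q* = S̄^{1/2}Φ(I − D^{-1})^{-1/2}D^{-1}(UΛ_1Uᴴ + I − D)D^{-1}(I − D^{-1})^{-1/2}ΦᴴS̄^{1/2}, and UΛ_1Uᴴ ≻ D − I), the secrecy rate achieved by Q* equals R(Q*) = Σ_{i=1}^{n_t} [log λ_{i,1} − log(λ_{i,1}+1)] + Σ_{i=1}^{n_t} [log d_i − log(d_i − 1)] = log det(I − (Λ_1+I)^{-1}) + log det(I + (D−I)^{-1}). -/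
/-!
Let `A = HᴴH − GᴴG`. Since `S̄^{1/2} A S̄^{1/2} = I`, the transform `T = S̄^{1/2} Φ (I − D⁻¹)^{-1/2} D⁻¹`
simultaneously diagonalizes both channel Gram matrices: `Tᴴ HᴴH T = (D − I)⁻¹` and
`Tᴴ GᴴG T = D⁻¹`. By Sylvester's identity `det(I + XY) = det(I + YX)`, with
`Q* = T M Tᴴ` and `M = UΛ₁Uᴴ + I − D`, the two determinants in the secrecy rate become
`det(I + M (D − I)⁻¹) = det(UΛ₁Uᴴ) det(D − I)⁻¹` and `det(I + M D⁻¹) = det(U(Λ₁ + I)Uᴴ) det D⁻¹`,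
whose logarithms differ by the claimed sums.
-/

open Matrix
open scoped ComplexOrder

namespace Matrix

theorem det_one_add_sandwich_comm {k m n R : Type*} [Fintype k] [Fintype m] [Fintype n]
    [DecidableEq k] [DecidableEq m] [CommRing R] (X : Matrix k n R) (T : Matrix n m R)
    (M : Matrix m m R) (T' : Matrix m n R) (Y : Matrix n k R) :
    det (1 + X * (T * M * T') * Y) = det (1 + M * (T' * (Y * X) * T)) := by
  rw [show X * (T * M * T') * Y = (X * T) * (M * T' * Y) by simp only [Matrix.mul_assoc],
    det_one_add_mul_comm]
  simp only [Matrix.mul_assoc]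

variable {n : Type*} [Fintype n] [DecidableEq n]

theorem inv_diagonal_of_ne_zero {K : Type*} [Field K] {v : n → K} (hv : ∀ i, v i ≠ 0) :
    (diagonal v)⁻¹ = diagonal fun i => (v i)⁻¹ :=
  inv_eq_right_inv <| by
    rw [diagonal_mul_diagonal, ← diagonal_one]
    exact congrArg _ (funext fun i => mul_inv_cancel₀ (hv i))

theorem mul_mul_eq_one_of_mul_self_eq_inv {K : Type*} [Field K] {A S : Matrix n n K}
    (hA : IsUnit A.det) (hS : S * S = A⁻¹) : S * A * S = 1 := by
  have hSA : S * (S * A) = 1 := by rw [← Matrix.mul_assoc, hS, nonsing_inv_mul _ hA]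
  exact mul_eq_one_comm.1 hSA

theorem congr_eq_diagonal_of_eq_conj {R : Type*} [CommRing R] [StarRing R]
    {Φ S X : Matrix n n R} {a : n → R} (hΦ : Φᴴ * Φ = 1)
    (h : S * X * S = Φ * diagonal a * Φᴴ) (c : n → R) :
    diagonal c * Φᴴ * S * X * (S * Φ * diagonal c) = diagonal fun i => c i * a i * c i := by
  calc diagonal c * Φᴴ * S * X * (S * Φ * diagonal c)
      = diagonal c * Φᴴ * (S * X * S) * Φ * diagonal c := by simp only [Matrix.mul_assoc]
    _ = diagonal c * (Φᴴ * Φ) * diagonal a * (Φᴴ * Φ) * diagonal c := by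
        rw [h]; simp only [Matrix.mul_assoc]
    _ = diagonal fun i => c i * a i * c i := by
        rw [hΦ, Matrix.mul_one, Matrix.mul_one, diagonal_mul_diagonal, diagonal_mul_diagonal]

theorem det_unitary_conj_diagonal_add {R : Type*} [CommRing R] [StarRing R] {U : Matrix n n R}
    (hU : U * Uᴴ = 1) (l : n → R) (κ : R) :
    det (U * diagonal l * Uᴴ + diagonal fun _ => κ) = ∏ i, (l i + κ) := by
  have hconj : U * diagonal l * Uᴴ + diagonal (fun _ => κ)
      = U * diagonal (fun i => l i + κ) * Uᴴ := by
    rw [← diagonal_add, Matrix.mul_add, Matrix.add_mul, ← smul_one_eq_diagonal, Matrix.mul_smul,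
      Matrix.smul_mul, Matrix.mul_one, hU]
  rw [hconj, det_mul, det_mul, mul_right_comm, ← det_mul, hU, det_one, one_mul, det_diagonal]

theorem one_add_sub_diagonal_mul_diagonal {K : Type*} [Field K] (V : Matrix n n K)
    {d f : n → K} (hf : ∀ i, f i ≠ 0) :
    1 + (V + 1 - diagonal d) * diagonal f
      = (V + diagonal fun i => (f i)⁻¹ + 1 - d i) * diagonal f := by
  have hdiag : (diagonal fun i => (f i)⁻¹ + 1 - d i) * diagonal f
      = 1 + diagonal f - diagonal d * diagonal f := by
    rw [diagonal_mul_diagonal, diagonal_mul_diagonal, ← diagonal_one, diagonal_add, diagonal_sub]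
    exact congrArg _ (funext fun i => by field_simp [hf i])
  rw [Matrix.add_mul, hdiag, Matrix.sub_mul, Matrix.add_mul, Matrix.one_mul]
  abel

theorem det_one_add_whitened_eq_prod {k K : Type*} [Fintype k] [DecidableEq k] [Field K]
    [StarRing K] (X : Matrix k n K) {S Φ U : Matrix n n K} (hΦ : Φᴴ * Φ = 1) (hU : U * Uᴴ = 1)
    {a c d f l : n → K} {κ : K} (hX : S * (Xᴴ * X) * S = Φ * diagonal a * Φᴴ)
    (hf : ∀ i, c i * a i * c i = f i) (hf0 : ∀ i, f i ≠ 0) (hκ : ∀ i, (f i)⁻¹ + 1 - d i = κ) :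
    det (1 + X * (S * Φ * diagonal c * (U * diagonal l * Uᴴ + 1 - diagonal d)
        * (diagonal c * Φᴴ * S)) * Xᴴ) = ∏ i, (l i + κ) * f i := by
  rw [det_one_add_sandwich_comm, congr_eq_diagonal_of_eq_conj hΦ hX, funext hf,
    one_add_sub_diagonal_mul_diagonal _ hf0, funext hκ, det_mul, det_unitary_conj_diagonal_add hU,
    det_diagonal, Finset.prod_mul_distrib]

end Matrix

/-- The diagonal entries of `(I − D⁻¹)^{-1/2} D⁻¹`. -/
noncomputable def whiteningGain (x : ℝ) : ℝ := (√(1 - x⁻¹))⁻¹ / x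

theorem whiteningGain_mul_self {x : ℝ} (hx : 1 < x) :
    whiteningGain x * whiteningGain x = ((x - 1) * x)⁻¹ := by
  have hx0 : x ≠ 0 := by positivity
  have hpos : 0 ≤ 1 - x⁻¹ := sub_nonneg.2 (inv_le_one_of_one_le₀ hx.le)
  rw [whiteningGain, div_mul_div_comm, ← mul_inv, Real.mul_self_sqrt hpos]
  field_simp

theorem whiteningGain_mul_mul_self {x : ℝ} (hx : 1 < x) :
    whiteningGain x * x * whiteningGain x = (x - 1)⁻¹ := by
  have hx0 : x ≠ 0 := by positivity
  rw [mul_right_comm, whiteningGain_mul_self hx]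
  field_simp

theorem whiteningGain_mul_sub_one_mul_self {x : ℝ} (hx : 1 < x) :
    whiteningGain x * (x - 1) * whiteningGain x = x⁻¹ := by
  have hx1 : x - 1 ≠ 0 := sub_ne_zero.2 hx.ne'
  rw [mul_right_comm, whiteningGain_mul_self hx]
  field_simp

theorem diagonal_inv_sqrt_one_sub_inv_mul_inv_diagonal {n : Type*} [Fintype n] [DecidableEq n]
    {d : n → ℝ} (hd : ∀ i, 1 < d i) :
    (diagonal fun i => ((√(1 - (d i)⁻¹))⁻¹ : ℂ)) * (diagonal fun i => (d i : ℂ))⁻¹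
      = diagonal fun i => (whiteningGain (d i) : ℂ) := by
  rw [inv_diagonal_of_ne_zero fun i => by exact_mod_cast (zero_lt_one.trans (hd i)).ne',
    diagonal_mul_diagonal]
  simp only [whiteningGain]
  push_cast
  rfl

theorem neg_one_add_sqrt_one_add_div_two_pos {x : ℝ} (hx : 0 < x) : 0 < (-1 + √(1 + x)) / 2 := by
  have : 1 < √(1 + x) := Real.lt_sqrt_of_sq_lt (by linarith)
  linarith

section LogDet

variable {ι : Type*} [Fintype ι] {l d : ι → ℝ}

theorem log_prod_sub_log_prod (hl : ∀ i, 0 < l i) (hd : ∀ i, 1 < d i) :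
    Real.log (∏ i, l i * (d i - 1)⁻¹) - Real.log (∏ i, (l i + 1) * (d i)⁻¹)
      = (∑ i, (Real.log (l i) - Real.log (l i + 1)))
        + ∑ i, (Real.log (d i) - Real.log (d i - 1)) := by
  have hl1 : ∀ i, 0 < l i + 1 := fun i => by linarith [hl i]
  have hd0 : ∀ i, 0 < d i := fun i => by linarith [hd i]
  have hd1 : ∀ i, 0 < d i - 1 := fun i => by linarith [hd i]
  rw [Real.log_prod fun i _ => by have := hl i; have := hd1 i; positivity,
    Real.log_prod fun i _ => by have := hl1 i; have := hd0 i; positivity,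
    ← Finset.sum_sub_distrib, ← Finset.sum_add_distrib]
  refine Finset.sum_congr rfl fun i _ => ?_
  rw [Real.log_mul (hl i).ne' (inv_ne_zero (hd1 i).ne'),
    Real.log_mul (hl1 i).ne' (inv_ne_zero (hd0 i).ne'), Real.log_inv, Real.log_inv]
  ring

variable [DecidableEq ι]

theorem log_det_one_sub_inv_diagonal_add_one (hl : ∀ i, 0 < l i) :
    Real.log (1 - (diagonal l + 1)⁻¹ : Matrix ι ι ℝ).det
      = ∑ i, (Real.log (l i) - Real.log (l i + 1)) := by
  have hl1 : ∀ i, 0 < l i + 1 := fun i => by linarith [hl i]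
  have hdiag : (1 - (diagonal l + 1)⁻¹ : Matrix ι ι ℝ) = diagonal fun i => l i / (l i + 1) := by
    rw [← diagonal_one, diagonal_add, inv_diagonal_of_ne_zero fun i => (hl1 i).ne', diagonal_sub]
    exact congrArg _ (funext fun i => by field_simp [(hl1 i).ne']; ring)
  rw [hdiag, det_diagonal, Real.log_prod fun i _ => (div_pos (hl i) (hl1 i)).ne']
  exact Finset.sum_congr rfl fun i _ => Real.log_div (hl i).ne' (hl1 i).ne'

theorem log_det_one_add_inv_diagonal_sub_one (hd : ∀ i, 1 < d i) :
    Real.log (1 + (diagonal d - 1)⁻¹ : Matrix ι ι ℝ).det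
      = ∑ i, (Real.log (d i) - Real.log (d i - 1)) := by
  have hd0 : ∀ i, 0 < d i := fun i => by linarith [hd i]
  have hd1 : ∀ i, 0 < d i - 1 := fun i => by linarith [hd i]
  have hdiag : (1 + (diagonal d - 1)⁻¹ : Matrix ι ι ℝ) = diagonal fun i => d i / (d i - 1) := by
    rw [← diagonal_one, diagonal_sub, inv_diagonal_of_ne_zero fun i => (hd1 i).ne', diagonal_add]
    exact congrArg _ (funext fun i => by field_simp [(hd1 i).ne']; ring)
  rw [hdiag, det_diagonal, Real.log_prod fun i _ => (div_pos (hd0 i) (hd1 i)).ne']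
  exact Finset.sum_congr rfl fun i _ => Real.log_div (hd0 i).ne' (hd1 i).ne'

end LogDet

theorem stmt13_general {nr ne nt : ℕ}
    (H : Matrix (Fin nr) (Fin nt) ℂ) (G : Matrix (Fin ne) (Fin nt) ℂ)
    (hHG : (Hᴴ * H - Gᴴ * G).PosDef)
    (Sr : Matrix (Fin nt) (Fin nt) ℂ)
    (hSrsq : Sr * Sr = (Hᴴ * H - Gᴴ * G)⁻¹)
    (Φ : Matrix (Fin nt) (Fin nt) ℂ) (hΦ : Φ * Φᴴ = 1 ∧ Φᴴ * Φ = 1)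
    (d : Fin nt → ℝ) (hd : ∀ i, 1 < d i)
    (DM : Matrix (Fin nt) (Fin nt) ℂ)
    (hDM : DM = Matrix.diagonal fun i => (d i : ℂ))
    (hDdecomp : Sr * (Gᴴ * G) * Sr + 1 = Φ * DM * Φᴴ)
    (E : Matrix (Fin nt) (Fin nt) ℂ)
    (hE : E = Matrix.diagonal fun i => ((Real.sqrt (1 - (d i)⁻¹))⁻¹ : ℂ))
    (U : Matrix (Fin nt) (Fin nt) ℂ) (hU : U * Uᴴ = 1 ∧ Uᴴ * U = 1)
    (ω : Fin nt → ℝ) (hω : ∀ i, 0 < ω i)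
    (μ : ℝ) (hμ : 0 < μ)
    (lam : Fin nt → ℝ)
    (hlam : ∀ i, lam i = (-1 + Real.sqrt (1 + 4 / (μ * ω i))) / 2)
    (L : Matrix (Fin nt) (Fin nt) ℂ)
    (hL : L = Matrix.diagonal fun i => (lam i : ℂ))
    (Qs : Matrix (Fin nt) (Fin nt) ℂ)
    (hQs : Qs = Sr * Φ * E * DM⁻¹ * (U * L * Uᴴ + 1 - DM) * DM⁻¹ * E * Φᴴ * Sr) :
    secrecyRate H G Qs
      = (∑ i : Fin nt, (Real.log (lam i) - Real.log (lam i + 1)))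
      + (∑ i : Fin nt, (Real.log (d i) - Real.log (d i - 1))) ∧
    secrecyRate H G Qs
      = Real.log ((1 - (Matrix.diagonal lam + 1)⁻¹ : Matrix (Fin nt) (Fin nt) ℝ).det)
      + Real.log ((1 + (Matrix.diagonal d - 1)⁻¹ : Matrix (Fin nt) (Fin nt) ℝ).det) := by
  have hlam0 : ∀ i, 0 < lam i := fun i =>
    hlam i ▸ neg_one_add_sqrt_one_add_div_two_pos (by have := hω i; positivity)
  have hwhite : Sr * (Hᴴ * H - Gᴴ * G) * Sr = 1 :=
    mul_mul_eq_one_of_mul_self_eq_inv (isUnit_iff_ne_zero.2 hHG.det_pos.ne') hSrsq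
  have hHdiag : Sr * (Hᴴ * H) * Sr = Φ * diagonal (fun i => (d i : ℂ)) * Φᴴ := by
    rw [← hDM, ← hDdecomp, ← hwhite, ← Matrix.add_mul, ← Matrix.mul_add, add_sub_cancel]
  have hGdiag : Sr * (Gᴴ * G) * Sr = Φ * diagonal (fun i => (d i : ℂ) - 1) * Φᴴ := by
    rw [eq_sub_of_add_eq hDdecomp, ← diagonal_sub, diagonal_one, ← hDM, Matrix.mul_sub,
      Matrix.sub_mul, Matrix.mul_one, hΦ.1]
  have hED : E * DM⁻¹ = diagonal fun i => (whiteningGain (d i) : ℂ) :=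
    hE ▸ hDM ▸ diagonal_inv_sqrt_one_sub_inv_mul_inv_diagonal hd
  have hDE : DM⁻¹ * E = E * DM⁻¹ := by
    rw [hE, hDM, inv_diagonal]
    exact (commute_diagonal _ _).eq
  have hQ : Qs = Sr * Φ * (E * DM⁻¹) * (U * L * Uᴴ + 1 - DM) * (DM⁻¹ * E * Φᴴ * Sr) := by
    rw [hQs]
    simp only [Matrix.mul_assoc]
  rw [hDE, hED, hL, hDM] at hQ
  have hdetH : (1 + H * Qs * Hᴴ).det = ((∏ i, lam i * (d i - 1)⁻¹ : ℝ) : ℂ) := by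
    rw [hQ, det_one_add_whitened_eq_prod H hΦ.2 hU.1 hHdiag (κ := 0)
      (f := fun i => (((d i - 1)⁻¹ : ℝ) : ℂ))
      (fun i => by exact_mod_cast whiteningGain_mul_mul_self (hd i))
      (fun i => by exact_mod_cast (inv_pos.2 (sub_pos.2 (hd i))).ne') (fun i => by simp)]
    push_cast
    simp
  have hdetG : (1 + G * Qs * Gᴴ).det = ((∏ i, (lam i + 1) * (d i)⁻¹ : ℝ) : ℂ) := by
    rw [hQ, det_one_add_whitened_eq_prod G hΦ.2 hU.1 hGdiag (κ := 1) (f := fun i => (((d i)⁻¹ : ℝ) : ℂ))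
      (fun i => by exact_mod_cast whiteningGain_mul_sub_one_mul_self (hd i))
      (fun i => by exact_mod_cast (inv_pos.2 (zero_lt_one.trans (hd i))).ne') (fun i => by simp)]
    push_cast
    simp
  have hrate : secrecyRate H G Qs
      = (∑ i, (Real.log (lam i) - Real.log (lam i + 1)))
        + ∑ i, (Real.log (d i) - Real.log (d i - 1)) := by
    rw [secrecyRate, hdetH, hdetG, Complex.ofReal_re, Complex.ofReal_re]
    exact log_prod_sub_log_prod hlam0 hd
  refine ⟨hrate, ?_⟩
  rw [hrate, log_det_one_sub_inv_diagonal_add_one hlam0, log_det_one_add_inv_diagonal_sub_one hd]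

/-- In the setting of the optimal full-rank covariance construction, the
secrecy rate achieved by `Q*` equals
`Σᵢ [log λ_{i,1} − log(λ_{i,1}+1)] + Σᵢ [log d_i − log(d_i−1)]
 = log det(I − (Λ₁+I)⁻¹) + log det(I + (D−I)⁻¹)`. -/
theorem stmt13 {nr ne nt : ℕ}
    (H : Matrix (Fin nr) (Fin nt) ℂ) (G : Matrix (Fin ne) (Fin nt) ℂ)
    (hHG : (Hᴴ * H - Gᴴ * G).PosDef) (hGG : (Gᴴ * G).PosDef)
    (Sr : Matrix (Fin nt) (Fin nt) ℂ) (hSr : Sr.PosDef)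
    (hSrsq : Sr * Sr = (Hᴴ * H - Gᴴ * G)⁻¹)
    (Φ : Matrix (Fin nt) (Fin nt) ℂ) (hΦ : Φ * Φᴴ = 1 ∧ Φᴴ * Φ = 1)
    (d : Fin nt → ℝ) (hd : ∀ i, 1 < d i)
    (DM : Matrix (Fin nt) (Fin nt) ℂ)
    (hDM : DM = Matrix.diagonal fun i => (d i : ℂ))
    (hDdecomp : Sr * (Gᴴ * G) * Sr + 1 = Φ * DM * Φᴴ)
    (E : Matrix (Fin nt) (Fin nt) ℂ)
    (hE : E = Matrix.diagonal fun i => ((Real.sqrt (1 - (d i)⁻¹))⁻¹ : ℂ))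
    (Sig : Matrix (Fin nt) (Fin nt) ℂ)
    (hSig : Sig = E * DM⁻¹ * Φᴴ * (Hᴴ * H - Gᴴ * G)⁻¹ * Φ * DM⁻¹ * E)
    (U : Matrix (Fin nt) (Fin nt) ℂ) (hU : U * Uᴴ = 1 ∧ Uᴴ * U = 1)
    (ω : Fin nt → ℝ) (hω : ∀ i, 0 < ω i)
    (hSigU : Sig = U * (Matrix.diagonal fun i => (ω i : ℂ)) * Uᴴ)
    (μ : ℝ) (hμ : 0 < μ)
    (lam : Fin nt → ℝ)
    (hlam : ∀ i, lam i = (-1 + Real.sqrt (1 + 4 / (μ * ω i))) / 2)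
    (L : Matrix (Fin nt) (Fin nt) ℂ)
    (hL : L = Matrix.diagonal fun i => (lam i : ℂ))
    (Qs : Matrix (Fin nt) (Fin nt) ℂ)
    (hQs : Qs = Sr * Φ * E * DM⁻¹ * (U * L * Uᴴ + 1 - DM) * DM⁻¹ * E * Φᴴ * Sr)
    (hfull : (U * L * Uᴴ - (DM - 1)).PosDef) :
    secrecyRate H G Qs
      = (∑ i : Fin nt, (Real.log (lam i) - Real.log (lam i + 1)))
      + (∑ i : Fin nt, (Real.log (d i) - Real.log (d i - 1))) ∧
    secrecyRate H G Qs
      = Real.log ((1 - (Matrix.diagonal lam + 1)⁻¹ : Matrix (Fin nt) (Fin nt) ℝ).det)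
      + Real.log ((1 + (Matrix.diagonal d - 1)⁻¹ : Matrix (Fin nt) (Fin nt) ℝ).det) :=
  stmt13_general H G hHG Sr hSrsq Φ hΦ d hd DM hDM hDdecomp E hE U hU ω hω μ hμ lam hlam L hL Qs hQs
end

section
/- Suppose HᴴH − GᴴG is positive definite and GᴴG is positive definite. For P > 0 define the secrecy capacity C(P) = sup{ R(Q) : Q Hermitian positive semidefinite with Tr(Q) ≤ P }. Then C(P) tends to log det(HᴴH) − log det(GᴴG) as P → ∞; i.e., the high-SNR secrecy capacity equals the sum of the logarithms of the squared generalized singular values of (H, G). -/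
/-!
Write `A = HᴴH` and `B = GᴴG`, so that `A - B ≻ 0` and `B ≻ 0`. By Sylvester's identity
`R(Q) = log det(1 + AQ) - log det(1 + BQ)
      = log det A - log det B + log det(A⁻¹ + Q) - log det(B⁻¹ + Q)`.
Matrix inversion is operator antitone, so `A⁻¹ ≤ B⁻¹`, and `det` is monotone on positive
definite matrices; hence `R(Q) ≤ log det A - log det B` for every `Q ⪰ 0`. Conversely
`R(c • 1) = log det(c⁻¹ • 1 + A) - log det(c⁻¹ • 1 + B)` tends to this bound as `c → ∞`,
and `c • 1` is admissible for the power `P = c · n_t`.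
-/

open Matrix
open scoped ComplexOrder

open Filter Topology

namespace Matrix

variable {n : Type*} [Fintype n] [DecidableEq n]

lemma det_one_add_mul_smul_one {K : Type*} [Field K] (A : Matrix n n K) {c : K} (hc : c ≠ 0) :
    (1 + A * (c • 1)).det = c ^ Fintype.card n * (c⁻¹ • 1 + A).det := by
  rw [← det_smul, smul_add, smul_smul, mul_inv_cancel₀ hc, one_smul, mul_smul_comm, mul_one]

lemma PosSemidef.one_le_det_one_add_s16 {P : Matrix n n ℂ} (hP : P.PosSemidef) :
    1 ≤ (1 + P).det := by
  have : IsSelfAdjoint P := hP.1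
  have hcfc : 1 + P = cfc (fun x : ℝ => 1 + x) P := by
    rw [cfc_const_add .., cfc_id' ..]; simp
  rw [hcfc, hP.1.cfc_eq]
  simp only [IsHermitian.cfc, Complex.coe_algebraMap, det_map, det_diagonal, Function.comp_apply,
    Complex.ofReal_add, Complex.ofReal_one]
  exact Finset.one_le_prod fun i _ =>
    le_add_of_nonneg_right (by exact_mod_cast hP.eigenvalues_nonneg i)

open scoped MatrixOrder in
lemma PosDef.det_le_det_add {M N : Matrix n n ℂ} (hM : M.PosDef) (hN : N.PosSemidef) :
    M.det ≤ (M + N).det := by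
  obtain ⟨T, rfl⟩ := CStarAlgebra.nonneg_iff_eq_star_mul_self.mp hN.nonneg
  have hfac : M + star T * T = M * (1 + M⁻¹ * star T * T) := by
    rw [mul_add, mul_one, ← mul_assoc, ← mul_assoc, mul_nonsing_inv _ hM.det_pos.ne'.isUnit,
      one_mul]
  have hone : 1 ≤ (1 + T * (M⁻¹ * Tᴴ)).det := by
    rw [← mul_assoc]; exact (hM.inv.posSemidef.mul_mul_conjTranspose_same T).one_le_det_one_add_s16
  calc M.det = M.det * 1 := (mul_one _).symm
    _ ≤ M.det * (1 + T * (M⁻¹ * Tᴴ)).det := mul_le_mul_of_nonneg_left hone hM.det_pos.le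
    _ = (M + star T * T).det := by
      rw [det_one_add_mul_comm, hfac, det_mul, star_eq_conjTranspose]

open scoped Matrix.Norms.L2Operator MatrixOrder in
lemma PosDef.posSemidef_inv_sub_inv {A B : Matrix n n ℂ} (hB : B.PosDef)
    (hAB : (A - B).PosSemidef) : (B⁻¹ - A⁻¹).PosSemidef := by
  simpa [le_iff, nonsing_inv_eq_ringInverse] using
    CStarAlgebra.ringInverse_le_ringInverse (a := B) (b := A) hAB hB.isStrictlyPositive

lemma PosDef.ofReal_re_det {M : Matrix n n ℂ} (hM : M.PosDef) : (M.det.re : ℂ) = M.det :=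
  (Complex.eq_re_of_ofReal_le (r := 0) (by simpa using hM.det_pos.le)).symm

lemma PosDef.re_det_pos {M : Matrix n n ℂ} (hM : M.PosDef) : 0 < M.det.re :=
  (Complex.lt_def.mp hM.det_pos).1

lemma PosDef.log_re_det_le_log_re_det_add {M N : Matrix n n ℂ} (hM : M.PosDef)
    (hN : N.PosSemidef) : Real.log M.det.re ≤ Real.log (M + N).det.re :=
  Real.log_le_log hM.re_det_pos (Complex.le_def.mp (hM.det_le_det_add hN)).1

lemma PosDef.log_re_det_one_add_mul {A Q : Matrix n n ℂ} (hA : A.PosDef) (hQ : Q.PosSemidef) :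
    Real.log (1 + A * Q).det.re = Real.log A.det.re + Real.log (A⁻¹ + Q).det.re := by
  have hfac : 1 + A * Q = A * (A⁻¹ + Q) := by
    rw [mul_add, mul_nonsing_inv _ hA.det_pos.ne'.isUnit]
  rw [hfac, det_mul, ← hA.ofReal_re_det, Complex.re_ofReal_mul, Complex.ofReal_re,
    Real.log_mul hA.re_det_pos.ne' (hA.inv.add_posSemidef hQ).re_det_pos.ne']

lemma log_re_det_one_add_mul_sub_le {A B Q : Matrix n n ℂ} (hB : B.PosDef)
    (hAB : (A - B).PosSemidef) (hQ : Q.PosSemidef) :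
    Real.log (1 + A * Q).det.re - Real.log (1 + B * Q).det.re ≤
      Real.log A.det.re - Real.log B.det.re := by
  have hA : A.PosDef := by simpa using hB.add_posSemidef hAB
  have hmono := (hA.inv.add_posSemidef hQ).log_re_det_le_log_re_det_add
    (hB.posSemidef_inv_sub_inv hAB)
  rw [show A⁻¹ + Q + (B⁻¹ - A⁻¹) = B⁻¹ + Q by abel] at hmono
  rw [hA.log_re_det_one_add_mul hQ, hB.log_re_det_one_add_mul hQ]
  linarith

lemma PosDef.log_re_det_one_add_mul_smul_one {A : Matrix n n ℂ} (hA : A.PosDef) {c : ℝ}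
    (hc : 0 < c) : Real.log (1 + A * ((c : ℂ) • 1)).det.re =
      Fintype.card n * Real.log c + Real.log (((c⁻¹ : ℝ) : ℂ) • 1 + A).det.re := by
  have hpos : (((c⁻¹ : ℝ) : ℂ) • 1 + A).PosDef :=
    (PosDef.one.smul (by exact_mod_cast inv_pos.mpr hc)).add_posSemidef hA.posSemidef
  rw [det_one_add_mul_smul_one A (by exact_mod_cast hc.ne'), ← Complex.ofReal_inv,
    ← Complex.ofReal_pow, Complex.re_ofReal_mul, Real.log_mul (by positivity) hpos.re_det_pos.ne',
    Real.log_pow]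

lemma PosDef.continuousAt_log_re_det_smul_one_add {A : Matrix n n ℂ} (hA : A.PosDef) :
    ContinuousAt (fun t : ℝ => Real.log (((t : ℂ) • 1 + A).det.re)) 0 :=
  (by fun_prop : Continuous fun t : ℝ => (((t : ℂ) • 1 + A).det.re)).continuousAt.log
    (by simpa using hA.re_det_pos.ne')

lemma tendsto_log_re_det_one_add_mul_smul_one_sub {A B : Matrix n n ℂ} (hA : A.PosDef)
    (hB : B.PosDef) :
    Tendsto (fun c : ℝ => Real.log (1 + A * ((c : ℂ) • 1)).det.re -
        Real.log (1 + B * ((c : ℂ) • 1)).det.re) atTop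
      (𝓝 (Real.log A.det.re - Real.log B.det.re)) := by
  have hcont := (hA.continuousAt_log_re_det_smul_one_add.sub
    hB.continuousAt_log_re_det_smul_one_add).tendsto.comp tendsto_inv_atTop_zero
  simp only [Pi.sub_apply, Complex.ofReal_zero, zero_smul, zero_add] at hcont
  refine hcont.congr' ?_
  filter_upwards [eventually_gt_atTop 0] with c hc
  simp only [Function.comp_apply, Pi.sub_apply, hA.log_re_det_one_add_mul_smul_one hc,
    hB.log_re_det_one_add_mul_smul_one hc]
  ring

end Matrix

lemma secrecyRate_eq {nr ne nt : ℕ} (H : Matrix (Fin nr) (Fin nt) ℂ)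
    (G : Matrix (Fin ne) (Fin nt) ℂ) (Q : Matrix (Fin nt) (Fin nt) ℂ) :
    secrecyRate H G Q =
      Real.log (1 + Hᴴ * H * Q).det.re - Real.log (1 + Gᴴ * G * Q).det.re := by
  rw [secrecyRate, det_one_add_mul_comm (H * Q), det_one_add_mul_comm (G * Q), Matrix.mul_assoc,
    Matrix.mul_assoc]

/-- If `HᴴH − GᴴG ≻ 0` and `GᴴG ≻ 0`, the secrecy capacity
`C(P) = sup{R(Q) : Q PSD, Tr Q ≤ P}` tends to
`log det(HᴴH) − log det(GᴴG)` as `P → ∞`. -/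
theorem stmt16 {nr ne nt : ℕ}
    (H : Matrix (Fin nr) (Fin nt) ℂ) (G : Matrix (Fin ne) (Fin nt) ℂ)
    (hHG : (Hᴴ * H - Gᴴ * G).PosDef) (hGG : (Gᴴ * G).PosDef)
    (C : ℝ → ℝ)
    (hC : ∀ P : ℝ, C P = sSup {r : ℝ | ∃ Q : Matrix (Fin nt) (Fin nt) ℂ,
      Q.PosSemidef ∧ Q.trace.re ≤ P ∧ r = secrecyRate H G Q}) :
    Filter.Tendsto C Filter.atTop
      (nhds (Real.log ((Hᴴ * H).det.re) - Real.log ((Gᴴ * G).det.re))) := by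
  have hHH : (Hᴴ * H).PosDef := by simpa using hGG.add_posSemidef hHG.posSemidef
  have hle : ∀ Q : Matrix (Fin nt) (Fin nt) ℂ, Q.PosSemidef →
      secrecyRate H G Q ≤ Real.log ((Hᴴ * H).det.re) - Real.log ((Gᴴ * G).det.re) :=
    fun Q hQ => (secrecyRate_eq H G Q).trans_le
      (log_re_det_one_add_mul_sub_le hGG hHG.posSemidef hQ)
  -- `nt + 1` rather than `nt`, so that the scale `P / (nt + 1)` still tends to `∞` when `nt = 0`
  set uniform : ℝ → Matrix (Fin nt) (Fin nt) ℂ := fun P => ((P / (nt + 1) : ℝ) : ℂ) • 1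
  have huniform : ∀ P, 0 ≤ P → (uniform P).PosSemidef ∧ (uniform P).trace.re ≤ P :=
    fun P hP => by
      refine ⟨PosSemidef.one.smul (by exact_mod_cast (by positivity : 0 ≤ P / (nt + 1))), ?_⟩
      rw [trace_smul, trace_one, Fintype.card_fin, smul_eq_mul, ← Complex.ofReal_natCast,
        ← Complex.ofReal_mul, Complex.ofReal_re, div_mul_eq_mul_div,
        div_le_iff₀ (by positivity)]
      nlinarith
  have hlim : Tendsto (fun P => secrecyRate H G (uniform P)) atTop
      (𝓝 (Real.log ((Hᴴ * H).det.re) - Real.log ((Gᴴ * G).det.re))) := by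
    simp only [secrecyRate_eq]
    exact (tendsto_log_re_det_one_add_mul_smul_one_sub hHH hGG).comp
      (tendsto_id.atTop_div_const (by positivity))
  refine tendsto_of_tendsto_of_tendsto_of_le_of_le' hlim tendsto_const_nhds ?_ ?_ <;>
    filter_upwards [eventually_ge_atTop 0] with P hP <;> rw [hC]
  · exact le_csSup ⟨_, by rintro _ ⟨Q, hQ, -, rfl⟩; exact hle Q hQ⟩
      ⟨uniform P, (huniform P hP).1, (huniform P hP).2, rfl⟩
  · exact csSup_le ⟨_, uniform P, (huniform P hP).1, (huniform P hP).2, rfl⟩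
      (by rintro _ ⟨Q, hQ, -, rfl⟩; exact hle Q hQ)
end

section
/- Suppose G = 0 (no eavesdropper channel) and HᴴH is positive definite. Fix μ > 0 such that μ^{-1} I − (HᴴH)^{-1} is positive semidefinite, and set Q* = μ^{-1} I − (HᴴH)^{-1} (the water-filling covariance, Q* = Φ_H (μ^{-1}I − Λ_H^{-1})⁺ Φ_Hᴴ for the eigendecomposition HᴴH = Φ_H Λ_H Φ_Hᴴ). Then Q* maximizes log det(I + H Q Hᴴ) over all Hermitian positive semidefinite Q with Tr(Q) = Tr(Q*). -/
open Matrix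
open scoped ComplexOrder

/-
Since `HᴴH` is invertible, `det(I + HQHᴴ) = det(HᴴH) · det((HᴴH)⁻¹ + Q)`, and `(HᴴH)⁻¹ + Q` is
positive definite with trace `Tr (HᴴH)⁻¹ + Tr Q*`, independent of `Q`. By AM-GM on its
eigenvalues, a positive semidefinite matrix of given trace has the largest determinant when it is
scalar, and `(HᴴH)⁻¹ + Q* = μ⁻¹ I` is scalar.
-/

theorem Real.prod_le_sum_div_card_pow {ι : Type*} (s : Finset ι) {z : ι → ℝ}
    (hz : ∀ i ∈ s, 0 ≤ z i) : ∏ i ∈ s, z i ≤ ((∑ i ∈ s, z i) / s.card) ^ s.card := by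
  rcases s.eq_empty_or_nonempty with rfl | hs
  · simp
  have hprod : 0 ≤ ∏ i ∈ s, z i := Finset.prod_nonneg hz
  have hcard : (s.card : ℝ) ≠ 0 := by exact_mod_cast hs.card_pos.ne'
  have amgm := Real.geom_mean_le_arith_mean s (fun _ ↦ 1) z (by simp)
    (by simpa using hs.card_pos) hz
  simp only [Real.rpow_one, Finset.sum_const, nsmul_eq_mul, mul_one, one_mul] at amgm
  calc ∏ i ∈ s, z i = ((∏ i ∈ s, z i) ^ (s.card : ℝ)⁻¹) ^ s.card := by
        rw [← Real.rpow_natCast, ← Real.rpow_mul hprod, inv_mul_cancel₀ hcard, Real.rpow_one]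
    _ ≤ _ := pow_le_pow_left₀ (Real.rpow_nonneg hprod _) amgm _

theorem Matrix.PosSemidef.det_le_trace_div_card_pow {𝕜 n : Type*} [RCLike 𝕜] [Fintype n]
    [DecidableEq n] {A : Matrix n n 𝕜} (hA : A.PosSemidef) :
    A.det ≤ (A.trace / Fintype.card n) ^ Fintype.card n := by
  rw [hA.isHermitian.det_eq_prod_eigenvalues, hA.isHermitian.trace_eq_sum_eigenvalues]
  have := Real.prod_le_sum_div_card_pow Finset.univ fun i _ ↦ hA.eigenvalues_nonneg i
  exact_mod_cast (RCLike.ofReal_le_ofReal (K := 𝕜)).mpr this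

theorem Matrix.det_one_add_mul_mul_eq_det_mul_det_inv_add {m n R : Type*} [Fintype m] [Fintype n]
    [DecidableEq m] [DecidableEq n] [CommRing R] (B : Matrix m n R) (C : Matrix n m R)
    (hCB : IsUnit (C * B).det) (X : Matrix n n R) :
    (1 + B * X * C).det = (C * B).det * ((C * B)⁻¹ + X).det := by
  rw [← det_mul, Matrix.mul_add, mul_nonsing_inv _ hCB, Matrix.mul_assoc, det_one_add_mul_comm,
    Matrix.mul_assoc, det_one_add_mul_comm]

theorem stmt17_general {nr nt : ℕ}
    (H : Matrix (Fin nr) (Fin nt) ℂ)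
    (hH : (Hᴴ * H).PosDef)
    (μ : ℝ)
    (Qstar : Matrix (Fin nt) (Fin nt) ℂ)
    (hQdef : Qstar = ((μ⁻¹ : ℝ) : ℂ) • (1 : Matrix (Fin nt) (Fin nt) ℂ) - (Hᴴ * H)⁻¹) :
    ∀ Q : Matrix (Fin nt) (Fin nt) ℂ, Q.PosSemidef → Q.trace = Qstar.trace →
      Real.log ((1 + H * Q * Hᴴ).det.re)
        ≤ Real.log ((1 + H * Qstar * Hᴴ).det.re) := by
  intro Q hQ htr
  have hdet := det_one_add_mul_mul_eq_det_mul_det_inv_add H Hᴴ hH.det_pos.ne'.isUnit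
  have hscalar : (Hᴴ * H)⁻¹ + Qstar = ((μ⁻¹ : ℝ) : ℂ) • 1 := by
    rw [hQdef]; abel
  have hpd : ((Hᴴ * H)⁻¹ + Q).PosDef := hH.inv.add_posSemidef hQ
  have hdet_le : ((Hᴴ * H)⁻¹ + Q).det ≤ ((Hᴴ * H)⁻¹ + Qstar).det := by
    calc _ ≤ (((Hᴴ * H)⁻¹ + Q).trace / nt) ^ nt := by
          simpa using hpd.posSemidef.det_le_trace_div_card_pow
      _ = ((Hᴴ * H)⁻¹ + Qstar).det := by
          rw [trace_add, htr, ← trace_add, hscalar, det_smul, det_one, mul_one, trace_smul,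
            trace_one, Fintype.card_fin, smul_eq_mul]
          rcases eq_or_ne nt 0 with rfl | hnt
          · simp
          · rw [mul_div_cancel_right₀ _ (Nat.cast_ne_zero.mpr hnt)]
  have hpos : 0 < (1 + H * Q * Hᴴ).det := by
    rw [hdet]; exact mul_pos hH.det_pos hpd.det_pos
  have hle : (1 + H * Q * Hᴴ).det ≤ (1 + H * Qstar * Hᴴ).det := by
    rw [hdet, hdet]; exact mul_le_mul_of_nonneg_left hdet_le hH.det_pos.le
  exact Real.log_le_log (Complex.lt_def.mp hpos).1 (Complex.le_def.mp hle).1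

/-- Water-filling: with `G = 0` and `HᴴH ≻ 0`, the covariance
`Q* = μ⁻¹I − (HᴴH)⁻¹` (assumed PSD) maximizes `log det(I + HQHᴴ)` among all
PSD `Q` with `Tr Q = Tr Q*`. -/
theorem stmt17 {nr nt : ℕ}
    (H : Matrix (Fin nr) (Fin nt) ℂ)
    (hH : (Hᴴ * H).PosDef)
    (μ : ℝ) (hμ : 0 < μ)
    (Qstar : Matrix (Fin nt) (Fin nt) ℂ)
    (hQdef : Qstar = ((μ⁻¹ : ℝ) : ℂ) • (1 : Matrix (Fin nt) (Fin nt) ℂ) - (Hᴴ * H)⁻¹)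
    (hQpsd : Qstar.PosSemidef) :
    ∀ Q : Matrix (Fin nt) (Fin nt) ℂ, Q.PosSemidef → Q.trace = Qstar.trace →
      Real.log ((1 + H * Q * Hᴴ).det.re)
        ≤ Real.log ((1 + H * Qstar * Hᴴ).det.re) :=
  stmt17_general H hH μ Qstar hQdef
end
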